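/- arXiv:2204.11453 — 5 statements merged into one kernel-verified Lean document; each statement's English description precedes it below -/
import Mathlib

section
/- Let V be a finite-dimensional real inner product space with orthonormal basis (u_1,...,u_d), and suppose V = V_1 ⊕ ... ⊕ V_r is an orthogonal direct sum with each u_i belonging to some V_{j(i)}. Fix positive reals α_1,...,α_s (s ≤ r) and define the quasi-norm |v| = max_{1≤j≤s} ‖π_j(v)‖^{α_j}, where π_j is the orthogonal projection onto V_j, and the quasi-distance d̃(v,w) = |v−w|; set d̃(v,W) = inf_{w∈W} d̃(v,w) for a subset W. Let W be an affine hyperplane with V_{s+1} ⊕ ... ⊕ V_r contained in W − W, cut out by an affine map φ_W with linear part l_W. Then for every v ∈ V, d̃(v,W) is comparable, up to multiplicative constants depending only on d and α, to min over indices i with l_W(u_i) ≠ 0 of |φ_W(v)/l_W(u_i)|^{α_{j(i)}}. -/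
/-!
Write `φ = l - t`. Moving `v` along a basis vector `u i` with `l (u i) ≠ 0` by the amount
`φ v / l (u i)` reaches `W` and changes only the `V_{j(i)}`-component, which gives the upper bound
with constant `1`. Conversely, if `w ∈ W` then `φ v = l (v - w) = ∑ i ⟪u i, v - w⟫ l (u i)`, and
`|⟪u i, v - w⟫| ≤ ‖π_{j(i)} (v - w)‖`; by pigeonhole some term is at least `φ v / d`, so
`|φ v / l (u i)| ≤ d ‖π_{j(i)} (v - w)‖` for some `i`, and that `j(i)` is one of the first `s`
indices because `l` kills `V_{s+1} ⊕ ⋯ ⊕ V_r`. Raising to the power `α_{j(i)}` costs at most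
`(d + 1) ^ (∑ j, α j)`, uniformly in `j(i)`.
-/

open Finset
open scoped InnerProductSpace

lemma LinearMap.apply_sub_div_smul_eq {K M : Type*} [Field K] [AddCommGroup M] [Module K M]
    (l : M →ₗ[K] K) (v e : M) (t : K) (he : l e ≠ 0) :
    l (v - ((l v - t) / l e) • e) = t := by
  rw [map_sub, map_smul, smul_eq_mul, div_mul_cancel₀ _ he]
  ring

lemma Real.rpow_neg_mul_rpow_le_rpow {a b K α M : ℝ} (ha : 0 ≤ a) (hK : 1 ≤ K) (hα : 0 ≤ α)
    (hαM : α ≤ M) (h : a ≤ K * b) : K ^ (-M) * a ^ α ≤ b ^ α := by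
  have hb : 0 ≤ b := nonneg_of_mul_nonneg_right (ha.trans h) (by linarith)
  calc K ^ (-M) * a ^ α ≤ K ^ (-α) * (K * b) ^ α := by gcongr
    _ = b ^ α := by
        rw [Real.mul_rpow (by linarith) hb, ← mul_assoc, ← Real.rpow_add (by linarith),
          neg_add_cancel, Real.rpow_zero, one_mul]

section

variable {V ι κ : Type*} [NormedAddCommGroup V] [InnerProductSpace ℝ V]

namespace OrthonormalBasis

variable [Fintype ι] (b : OrthonormalBasis ι ℝ V)

lemma exists_apply_ne_zero {l : V →ₗ[ℝ] ℝ} (hl : l ≠ 0) : ∃ i, l (b i) ≠ 0 := by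
  by_contra! h
  exact hl (b.toBasis.ext fun i => by simpa using h i)

lemma apply_eq_sum_inner_mul (l : V →ₗ[ℝ] ℝ) (x : V) : l x = ∑ i, ⟪b i, x⟫_ℝ * l (b i) := by
  conv_lhs => rw [← b.sum_repr' x]
  simp only [map_sum, map_smul, smul_eq_mul]

end OrthonormalBasis

section Projections

variable (π : κ → V →ₗ[ℝ] V)

lemma abs_inner_le_norm_mul_norm_proj [Fintype κ] (hsum : ∀ v, ∑ j, π j v = v)
    (horth : ∀ i j, i ≠ j → ∀ v w, ⟪π i v, π j w⟫_ℝ = 0) {e : V} {j₀ : κ} (he : π j₀ e = e)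
    (x : V) : |⟪e, x⟫_ℝ| ≤ ‖e‖ * ‖π j₀ x‖ := by
  have : ⟪e, x⟫_ℝ = ⟪e, π j₀ x⟫_ℝ := by
    conv_lhs => rw [← hsum x]
    rw [inner_sum]
    refine sum_eq_single j₀ (fun j _ hj => ?_) (by simp)
    rw [← he]
    exact horth _ _ hj.symm _ _
  rw [this]
  exact abs_real_inner_le_norm _ _

lemma exists_abs_div_le_card_mul_norm_proj [Fintype κ] [Fintype ι]
    (hsum : ∀ v, ∑ j, π j v = v) (horth : ∀ i j, i ≠ j → ∀ v w, ⟪π i v, π j w⟫_ℝ = 0)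
    (b : OrthonormalBasis ι ℝ V) (jmap : ι → κ) (hb : ∀ i, π (jmap i) (b i) = b i)
    {l : V →ₗ[ℝ] ℝ} (hl : l ≠ 0) (x : V) :
    ∃ i, l (b i) ≠ 0 ∧ |l x / l (b i)| ≤ Fintype.card ι * ‖π (jmap i) x‖ := by
  classical
  set S := univ.filter fun i => l (b i) ≠ 0
  have hS : S.Nonempty := by
    obtain ⟨i, hi⟩ := b.exists_apply_ne_zero hl
    exact ⟨i, mem_filter.2 ⟨mem_univ i, hi⟩⟩
  have hcard : (0 : ℝ) < #S := by exact_mod_cast hS.card_pos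
  have hsum_le : ∑ _i ∈ S, |l x| / #S ≤ ∑ i ∈ S, ‖π (jmap i) x‖ * |l (b i)| :=
    calc ∑ _i ∈ S, |l x| / #S = |∑ i, ⟪b i, x⟫_ℝ * l (b i)| := by
          rw [sum_const, nsmul_eq_mul, mul_div_cancel₀ _ hcard.ne', ← b.apply_eq_sum_inner_mul]
      _ ≤ ∑ i, |⟪b i, x⟫_ℝ| * |l (b i)| := by
          simpa only [abs_mul] using abs_sum_le_sum_abs (fun i => ⟪b i, x⟫_ℝ * l (b i)) univ
      _ ≤ ∑ i, ‖π (jmap i) x‖ * |l (b i)| := by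
          gcongr with i
          simpa using abs_inner_le_norm_mul_norm_proj π hsum horth (hb i) x
      _ = ∑ i ∈ S, ‖π (jmap i) x‖ * |l (b i)| :=
          (sum_filter_of_ne fun i _ h => by simpa using right_ne_zero_of_mul h).symm
  obtain ⟨i, hiS, hi⟩ := exists_le_of_sum_le hS hsum_le
  have hli : l (b i) ≠ 0 := (mem_filter.1 hiS).2
  have hSι : (#S : ℝ) ≤ Fintype.card ι := by exact_mod_cast card_le_univ S
  refine ⟨i, hli, ?_⟩
  rw [abs_div, div_le_iff₀ (abs_pos.2 hli)]
  calc |l x| ≤ #S * (‖π (jmap i) x‖ * |l (b i)|) := by rwa [div_le_iff₀' hcard] at hi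
    _ ≤ Fintype.card ι * ‖π (jmap i) x‖ * |l (b i)| := by
        rw [← mul_assoc]
        gcongr

lemma iSup_norm_proj_smul_rpow_le {p : κ → Prop} (α : κ → ℝ) (hα : ∀ j, 0 < α j) {e : V}
    (he1 : ‖e‖ = 1) {j₀ : κ} (he : π j₀ e = e) (he0 : ∀ j ≠ j₀, π j e = 0) (a : ℝ) :
    ⨆ j : {j // p j}, ‖π j (a • e)‖ ^ α j ≤ |a| ^ α j₀ := by
  refine Real.iSup_le (fun ⟨j, _⟩ => ?_) (by positivity)
  rcases eq_or_ne j j₀ with rfl | hj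
  · simp [he, norm_smul, he1]
  · simp only [map_smul, he0 j hj, smul_zero, norm_zero, Real.zero_rpow (hα j).ne']
    positivity

end Projections

end

theorem quasi_distance_to_affine_hyperplane_general
    {V : Type*} [NormedAddCommGroup V] [InnerProductSpace ℝ V]
    (d r s : ℕ)
    -- the orthogonal decomposition `V = V_1 ⊕ ⋯ ⊕ V_r` given by its projections
    (π : Fin r → (V →ₗ[ℝ] V))
    (hsum : ∀ v : V, ∑ j, π j v = v)
    (hproj : ∀ i j : Fin r, ∀ v : V, π i (π j v) = if i = j then π j v else 0)
    (horth : ∀ i j : Fin r, i ≠ j → ∀ v w : V, inner ℝ (π i v) (π j w) = (0 : ℝ))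
    -- the orthonormal basis `(u_1, …, u_d)`, compatible with the decomposition
    (u : Fin d → V) (hu : Orthonormal ℝ u)
    (huspan : Submodule.span ℝ (Set.range u) = ⊤)
    (jmap : Fin d → Fin r) (hujmap : ∀ i : Fin d, π (jmap i) (u i) = u i)
    -- the exponents `α_1, …, α_s > 0`
    (α : Fin r → ℝ) (hα : ∀ j : Fin r, 0 < α j) :
    ∃ c C : ℝ, 0 < c ∧ 0 < C ∧
      ∀ (l : V →ₗ[ℝ] ℝ) (t : ℝ), l ≠ 0 →
        (∀ v : V, (∀ j : Fin r, (j : ℕ) < s → π j v = 0) → l v = 0) →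
        ∀ v : V,
          c * (⨅ i : {i : Fin d // l (u i) ≠ 0}, |(l v - t) / l (u (i : Fin d))| ^ α (jmap i)) ≤
              (⨅ w : {w : V // l w = t},
                ⨆ j : {j : Fin r // (j : ℕ) < s}, ‖π j (v - (w : V))‖ ^ α j) ∧
            (⨅ w : {w : V // l w = t},
                ⨆ j : {j : Fin r // (j : ℕ) < s}, ‖π j (v - (w : V))‖ ^ α j) ≤
              C * (⨅ i : {i : Fin d // l (u i) ≠ 0},
                |(l v - t) / l (u (i : Fin d))| ^ α (jmap i)) := by
  obtain ⟨b, rfl⟩ : ∃ b : OrthonormalBasis (Fin d) ℝ V, ⇑b = u :=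
    ⟨_, OrthonormalBasis.coe_mk hu huspan.ge⟩
  have hb0 (i : Fin d) (j : Fin r) (hj : j ≠ jmap i) : π j (b i) = 0 := by
    rw [← hujmap i, hproj, if_neg hj]
  refine ⟨(d + 1 : ℝ) ^ (-∑ j, α j), 1, by positivity, one_pos, fun l t hl hker v => ?_⟩
  have hjs (i : Fin d) (hi : l (b i) ≠ 0) : (jmap i : ℕ) < s := by
    by_contra! h
    exact hi (hker _ fun j hj => hb0 i j (by rintro rfl; omega))
  obtain ⟨i₀, hi₀⟩ := b.exists_apply_ne_zero hl
  have : Nonempty {i // l (b i) ≠ 0} := ⟨⟨i₀, hi₀⟩⟩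
  have : Nonempty {w // l w = t} := ⟨⟨_, l.apply_sub_div_smul_eq v (b i₀) t hi₀⟩⟩
  constructor
  · refine le_ciInf fun ⟨w, hw⟩ => ?_
    obtain ⟨i, hi, hle⟩ := exists_abs_div_le_card_mul_norm_proj π hsum horth b jmap hujmap hl (v - w)
    rw [map_sub, hw, Fintype.card_fin] at hle
    calc (d + 1 : ℝ) ^ (-∑ j, α j) * ⨅ i : {i // l (b i) ≠ 0}, |(l v - t) / l (b i)| ^ α (jmap i)
        ≤ (d + 1 : ℝ) ^ (-∑ j, α j) * |(l v - t) / l (b i)| ^ α (jmap i) := by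
          gcongr
          exact ciInf_le ⟨0, by rintro _ ⟨i, rfl⟩; positivity⟩ (⟨i, hi⟩ : {i // l (b i) ≠ 0})
      _ ≤ ‖π (jmap i) (v - w)‖ ^ α (jmap i) :=
          Real.rpow_neg_mul_rpow_le_rpow (abs_nonneg _) (by linarith [d.cast_nonneg (α := ℝ)])
            (hα _).le (single_le_sum (fun j _ => (hα j).le) (mem_univ _))
            (hle.trans (by gcongr; linarith))
      _ ≤ ⨆ j : {j : Fin r // (j : ℕ) < s}, ‖π j (v - w)‖ ^ α j :=
          le_ciSup (f := fun j : {j : Fin r // (j : ℕ) < s} => ‖π j (v - w)‖ ^ α j)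
            (Set.finite_range _).bddAbove ⟨jmap i, hjs i hi⟩
  · rw [one_mul]
    refine le_ciInf fun ⟨i, hi⟩ => ?_
    refine (ciInf_le ⟨0, ?_⟩ ⟨_, l.apply_sub_div_smul_eq v (b i) t hi⟩).trans ?_
    · rintro _ ⟨w, rfl⟩
      exact Real.iSup_nonneg fun j => by positivity
    · rw [sub_sub_cancel]
      exact iSup_norm_proj_smul_rpow_le π α hα (b.orthonormal.1 i) (hujmap i) (hb0 i) _

/-- Comparison of the quasi-distance to an affine hyperplane with the
minimum of `|φ_W(v)/l_W(u i)| ^ α (j i)` over indices `i` with `l_W (u i) ≠ 0`.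
The affine hyperplane is `W = {w | l w = t}` (affine map `φ_W(v) = l v - t`, linear
part `l`), and the hypothesis `V_{s+1} ⊕ ⋯ ⊕ V_r ⊆ W - W` is expressed by saying that
`l` vanishes on every vector killed by all the projections `π j` with `j < s`. -/
theorem quasi_distance_to_affine_hyperplane
    {V : Type*} [NormedAddCommGroup V] [InnerProductSpace ℝ V] [FiniteDimensional ℝ V]
    (d r s : ℕ) (hs : s ≤ r)
    -- the orthogonal decomposition `V = V_1 ⊕ ⋯ ⊕ V_r` given by its projections
    (π : Fin r → (V →ₗ[ℝ] V))
    (hsum : ∀ v : V, ∑ j, π j v = v)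
    (hproj : ∀ i j : Fin r, ∀ v : V, π i (π j v) = if i = j then π j v else 0)
    (horth : ∀ i j : Fin r, i ≠ j → ∀ v w : V, inner ℝ (π i v) (π j w) = (0 : ℝ))
    -- the orthonormal basis `(u_1, …, u_d)`, compatible with the decomposition
    (u : Fin d → V) (hu : Orthonormal ℝ u)
    (huspan : Submodule.span ℝ (Set.range u) = ⊤)
    (jmap : Fin d → Fin r) (hujmap : ∀ i : Fin d, π (jmap i) (u i) = u i)
    -- the exponents `α_1, …, α_s > 0`
    (α : Fin r → ℝ) (hα : ∀ j : Fin r, 0 < α j) :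
    ∃ c C : ℝ, 0 < c ∧ 0 < C ∧
      ∀ (l : V →ₗ[ℝ] ℝ) (t : ℝ), l ≠ 0 →
        (∀ v : V, (∀ j : Fin r, (j : ℕ) < s → π j v = 0) → l v = 0) →
        ∀ v : V,
          c * (⨅ i : {i : Fin d // l (u i) ≠ 0}, |(l v - t) / l (u (i : Fin d))| ^ α (jmap i)) ≤
              (⨅ w : {w : V // l w = t},
                ⨆ j : {j : Fin r // (j : ℕ) < s}, ‖π j (v - (w : V))‖ ^ α j) ∧
            (⨅ w : {w : V // l w = t},
                ⨆ j : {j : Fin r // (j : ℕ) < s}, ‖π j (v - (w : V))‖ ^ α j) ≤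
              C * (⨅ i : {i : Fin d // l (u i) ≠ 0},
                |(l v - t) / l (u (i : Fin d))| ^ α (jmap i)) :=
  quasi_distance_to_affine_hyperplane_general d r s π hsum hproj horth u hu huspan jmap hujmap α hα
end

section
/- Let E be a real associative algebra and η a finite Borel measure on E with η(E) ≤ 1. Set μ = η*η*η ⊟ η*η*η (difference of two independent triple multiplicative convolutions). Then for every integer m ≥ 1 and every linear functional ξ on E, |(η^{*3m})^∧(ξ)|^{2^m} ≤ |(μ^{*m})^∧(ξ)|, where η^{*k} and μ^{*m} denote k-fold and m-fold multiplicative convolution powers. -/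
/-!
Put `e(t) = exp(2πit)` and `g(x, z) = ∫ e(ξ(x y z)) dβ(y)`. Then `(α * β * γ)^(ξ)` is the
integral of `g` against `α ⊗ γ`, while `(α * (β ⊟ β) * γ)^(ξ)` is the integral of `|g|²`, because
the Fourier transform of `β ⊟ β` is `|β̂|²`. Cauchy–Schwarz for the measure `α ⊗ γ` of mass at
most one gives `|(α * β * γ)^(ξ)|² ≤ (α * (β ⊟ β) * γ)^(ξ)`. Writing `η^{*3m}` as the `m`-th power
of `β = η^{*3}` and replacing its factors one at a time, the factors already replaced being
absorbed into `γ`, each replacement costs one squaring of the left-hand side.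
-/

open MeasureTheory

/-- Multiplicative convolution: image of `μ ⊗ ν` under `(x, y) ↦ x * y`. -/
noncomputable def mulConv {E : Type*} [Mul E] [MeasurableSpace E]
    (μ ν : Measure E) : Measure E :=
  Measure.map (fun p : E × E => p.1 * p.2) (μ.prod ν)

/-- Difference convolution: image of `μ ⊗ ν` under `(x, y) ↦ x - y`. -/
noncomputable def subConv {E : Type*} [Sub E] [MeasurableSpace E]
    (μ ν : Measure E) : Measure E :=
  Measure.map (fun p : E × E => p.1 - p.2) (μ.prod ν)

/-- `k`-fold multiplicative convolution power (`μ^{*0}` is the Dirac mass at `1`). -/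
noncomputable def mulConvPow {E : Type*} [Monoid E] [MeasurableSpace E]
    (μ : Measure E) : ℕ → Measure E
  | 0 => Measure.dirac 1
  | k + 1 => mulConv (mulConvPow μ k) μ

/-- Fourier transform of a finite measure on `E` at a linear functional `ξ`. -/
noncomputable def fourierAt {E : Type*} [AddCommGroup E] [Module ℝ E] [MeasurableSpace E]
    (μ : Measure E) (ξ : E →ₗ[ℝ] ℝ) : ℂ :=
  ∫ x, Complex.exp (2 * Real.pi * Complex.I * (ξ x : ℂ)) ∂μ

open Set ComplexConjugate
open scoped FourierTransform

section CauchySchwarz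

variable {X : Type*} [MeasurableSpace X] {ρ : Measure X}

lemma sq_integral_le_integral_sq (hρ : ρ univ ≤ 1) {g : X → ℝ} (hg : MemLp g 2 ρ) :
    (∫ x, g x ∂ρ) ^ 2 ≤ ∫ x, g x ^ 2 ∂ρ := by
  have : IsFiniteMeasure ρ := ⟨hρ.trans_lt ENNReal.one_lt_top⟩
  set c := ∫ x, g x ∂ρ
  have hg1 : Integrable g ρ := hg.integrable one_le_two
  have hg2 : Integrable (fun x => g x ^ 2) ρ := hg.integrable_sq
  have hmass : ρ.real univ ≤ 1 := ENNReal.toReal_le_of_le_ofReal zero_le_one (by simpa using hρ)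
  have hvar : ∫ x, (g x - c) ^ 2 ∂ρ = ∫ x, g x ^ 2 ∂ρ - 2 * c * c + c ^ 2 * ρ.real univ := by
    have hexp : ∀ x, (g x - c) ^ 2 = (g x ^ 2 - 2 * c * g x) + c ^ 2 := fun x => by ring
    simp_rw [hexp]
    rw [integral_add (f := fun x => g x ^ 2 - 2 * c * g x) (hg2.sub (hg1.const_mul _))
      (integrable_const _), integral_sub hg2 (hg1.const_mul _), integral_const_mul,
      integral_const, smul_eq_mul]
    ring
  have : 0 ≤ ∫ x, (g x - c) ^ 2 ∂ρ := integral_nonneg fun x => sq_nonneg (g x - c)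
  nlinarith [sq_nonneg c]

lemma sq_norm_integral_le_integral_sq_norm {F : Type*} [NormedAddCommGroup F] [NormedSpace ℝ F]
    (hρ : ρ univ ≤ 1) {f : X → F} (hf : MemLp f 2 ρ) :
    ‖∫ x, f x ∂ρ‖ ^ 2 ≤ ∫ x, ‖f x‖ ^ 2 ∂ρ :=
  (pow_le_pow_left₀ (norm_nonneg _) (norm_integral_le_integral_norm f) 2).trans
    (sq_integral_le_integral_sq hρ hf.norm)

end CauchySchwarz

section ConvolutionPowers

variable {M : Type*} [Monoid M] [MeasurableSpace M]

lemma mulConvPow_zero (μ : Measure M) : mulConvPow μ 0 = Measure.dirac 1 := rfl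

-- `mulConv` is Mathlib's `Measure.mconv` by definition, so its library theory applies.
lemma mulConvPow_succ (μ : Measure M) (n : ℕ) :
    mulConvPow μ (n + 1) = mulConvPow μ n ∗ₘ μ := rfl

instance (μ : Measure M) [SFinite μ] (n : ℕ) : SFinite (mulConvPow μ n) := by
  induction n with
  | zero => rw [mulConvPow_zero]; infer_instance
  | succ n ih => rw [mulConvPow_succ]; infer_instance

instance (μ : Measure M) [IsFiniteMeasure μ] (n : ℕ) : IsFiniteMeasure (mulConvPow μ n) := by
  induction n with
  | zero => rw [mulConvPow_zero]; infer_instance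
  | succ n ih => rw [mulConvPow_succ]; infer_instance

variable [MeasurableMul₂ M]

lemma mulConvPow_add (μ : Measure M) [SFinite μ] (a b : ℕ) :
    mulConvPow μ (a + b) = mulConvPow μ a ∗ₘ mulConvPow μ b := by
  induction b with
  | zero => rw [Nat.add_zero, mulConvPow_zero, Measure.mconv_dirac_one]
  | succ b ih => rw [← Nat.add_assoc, mulConvPow_succ, ih, mulConvPow_succ, Measure.mconv_assoc]

lemma mulConvPow_mul (μ : Measure M) [SFinite μ] (a b : ℕ) :
    mulConvPow μ (a * b) = mulConvPow (mulConvPow μ a) b := by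
  induction b with
  | zero => rfl
  | succ b ih => rw [Nat.mul_succ, mulConvPow_add, ih, mulConvPow_succ]

lemma mconv_apply_univ (μ ν : Measure M) [SFinite ν] :
    (μ ∗ₘ ν) univ = μ univ * ν univ := by
  rw [Measure.mconv, Measure.map_apply measurable_mul MeasurableSet.univ, preimage_univ,
    ← univ_prod_univ, Measure.prod_prod]

lemma mulConvPow_apply_univ_le {μ : Measure M} [SFinite μ] (hμ : μ univ ≤ 1) (n : ℕ) :
    mulConvPow μ n univ ≤ 1 := by
  induction n with
  | zero => simp [mulConvPow_zero]
  | succ n ih => rw [mulConvPow_succ, mconv_apply_univ]; exact mul_le_one' ih hμ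

lemma mconv_mconv_eq_map_prod (α ν γ : Measure M) [SFinite ν] [SFinite γ] :
    (α ∗ₘ ν) ∗ₘ γ = ((α.prod γ).prod ν).map fun q => q.1.1 * q.2 * q.1.2 := by
  refine Measure.ext_of_lintegral _ fun f hf => ?_
  rw [Measure.lintegral_mconv hf, Measure.lintegral_mconv (by fun_prop),
    lintegral_map hf (by fun_prop), lintegral_prod _ (by fun_prop), lintegral_prod _ (by fun_prop)]
  exact lintegral_congr fun x => lintegral_lintegral_swap (by fun_prop)

end ConvolutionPowers

lemma subConv_apply_univ {G : Type*} [Sub G] [MeasurableSpace G] [MeasurableSub₂ G]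
    (μ ν : Measure G) [SFinite ν] : subConv μ ν univ = μ univ * ν univ := by
  rw [subConv, Measure.map_apply measurable_sub MeasurableSet.univ, preimage_univ,
    ← univ_prod_univ, Measure.prod_prod]

instance {G : Type*} [Sub G] [MeasurableSpace G] [MeasurableSub₂ G] (μ ν : Measure G)
    [IsFiniteMeasure μ] [IsFiniteMeasure ν] : IsFiniteMeasure (subConv μ ν) :=
  ⟨by rw [subConv_apply_univ]; exact ENNReal.mul_lt_top (measure_lt_top _ _) (measure_lt_top _ _)⟩

section Fourier

variable {V : Type*} [AddCommGroup V] [Module ℝ V] [MeasurableSpace V]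

lemma fourierAt_eq_integral_fourierChar (μ : Measure V) (ξ : V →ₗ[ℝ] ℝ) :
    fourierAt μ ξ = ∫ x, (𝐞 (ξ x) : ℂ) ∂μ := by
  simp only [fourierAt, Real.fourierChar_apply]
  congr! 3
  push_cast
  ring

lemma norm_fourierAt_le (μ : Measure V) [IsFiniteMeasure μ] (ξ : V →ₗ[ℝ] ℝ) :
    ‖fourierAt μ ξ‖ ≤ μ.real univ := by
  rw [fourierAt_eq_integral_fourierChar]
  simpa using norm_integral_le_of_norm_le_const
    (ae_of_all μ fun x => (Circle.norm_coe (𝐞 (ξ x))).le)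

lemma fourierChar_sub (s t : ℝ) : (𝐞 (s - t) : ℂ) = 𝐞 s * conj (𝐞 t : ℂ) := by
  rw [AddChar.map_sub_eq_div, Circle.coe_div, div_eq_mul_inv, ← Circle.coe_inv,
    Circle.coe_inv_eq_conj]

lemma fourierAt_subConv_self [MeasurableSub₂ V] (β : Measure V) [SFinite β] {ξ : V →ₗ[ℝ] ℝ}
    (hξ : Measurable ξ) : fourierAt (subConv β β) ξ = ((‖fourierAt β ξ‖ ^ 2 : ℝ) : ℂ) := by
  rw [fourierAt_eq_integral_fourierChar, fourierAt_eq_integral_fourierChar, subConv,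
    integral_map measurable_sub.aemeasurable (by fun_prop)]
  have hsub : ∀ p : V × V, (𝐞 (ξ (p.1 - p.2)) : ℂ) = 𝐞 (ξ p.1) * conj (𝐞 (ξ p.2) : ℂ) :=
    fun p => by rw [map_sub, fourierChar_sub]
  simp_rw [hsub]
  rw [integral_prod_mul (fun x => (𝐞 (ξ x) : ℂ)) (fun x => conj (𝐞 (ξ x) : ℂ)), integral_conj,
    Complex.mul_conj, Complex.normSq_eq_norm_sq]

end Fourier

section RealAlgebra

variable {E : Type*} [Ring E] [Algebra ℝ E] [MeasurableSpace E] [MeasurableMul₂ E]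

lemma fourierAt_mconv_mconv (α ν γ : Measure E) [IsFiniteMeasure α] [IsFiniteMeasure ν]
    [IsFiniteMeasure γ] {ξ : E →ₗ[ℝ] ℝ} (hξ : Measurable ξ) :
    fourierAt ((α ∗ₘ ν) ∗ₘ γ) ξ =
      ∫ p, fourierAt ν (ξ ∘ₗ LinearMap.mulLeftRight ℝ p) ∂(α.prod γ) := by
  rw [mconv_mconv_eq_map_prod, fourierAt_eq_integral_fourierChar,
    integral_map (by fun_prop) (by fun_prop)]
  simp_rw [fourierAt_eq_integral_fourierChar]
  refine integral_prod _ (.of_bound (Measurable.aestronglyMeasurable ?_) 1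
    (ae_of_all _ fun q => (Circle.norm_coe _).le))
  fun_prop

lemma sq_norm_fourierAt_mconv_le_norm_fourierAt_mconv_subConv [MeasurableSub₂ E]
    (α β γ : Measure E) [IsFiniteMeasure α] [IsFiniteMeasure β] [IsFiniteMeasure γ]
    (hα : α univ ≤ 1) (hγ : γ univ ≤ 1) {ξ : E →ₗ[ℝ] ℝ} (hξ : Measurable ξ) :
    ‖fourierAt ((α ∗ₘ β) ∗ₘ γ) ξ‖ ^ 2 ≤ ‖fourierAt ((α ∗ₘ subConv β β) ∗ₘ γ) ξ‖ := by
  have hαγ : α.prod γ univ ≤ 1 := by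
    rw [← univ_prod_univ, Measure.prod_prod]; exact mul_le_one' hα hγ
  have hg : MemLp (fun p => fourierAt β (ξ ∘ₗ LinearMap.mulLeftRight ℝ p)) 2 (α.prod γ) := by
    refine .of_bound ?_ (β.real univ) (ae_of_all _ fun p => norm_fourierAt_le β _)
    simp_rw [fourierAt_eq_integral_fourierChar]
    exact (StronglyMeasurable.integral_prod_right'
      (f := fun q : (E × E) × E => (𝐞 (ξ (q.1.1 * q.2 * q.1.2)) : ℂ))
      (Measurable.stronglyMeasurable (by fun_prop))).aestronglyMeasurable
  have hsandwich : ∀ p : E × E, Measurable (ξ ∘ₗ LinearMap.mulLeftRight ℝ p) := fun p =>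
    hξ.comp ((measurable_const_mul p.1).mul_const p.2)
  rw [fourierAt_mconv_mconv _ _ _ hξ, fourierAt_mconv_mconv _ _ _ hξ,
    integral_congr_ae (ae_of_all _ fun p => fourierAt_subConv_self β (hsandwich p)),
    integral_complex_ofReal, Complex.norm_real,
    Real.norm_of_nonneg (integral_nonneg fun _ => sq_nonneg _)]
  exact sq_norm_integral_le_integral_sq_norm hαγ hg

lemma pow_norm_fourierAt_mulConvPow_mconv_le [MeasurableSub₂ E] (β : Measure E)
    [IsFiniteMeasure β] (hβ : β univ ≤ 1) {ξ : E →ₗ[ℝ] ℝ} (hξ : Measurable ξ) (m : ℕ)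
    (γ : Measure E) [IsFiniteMeasure γ] (hγ : γ univ ≤ 1) :
    ‖fourierAt (mulConvPow β m ∗ₘ γ) ξ‖ ^ 2 ^ m ≤
      ‖fourierAt (mulConvPow (subConv β β) m ∗ₘ γ) ξ‖ := by
  induction m generalizing γ with
  | zero => rw [mulConvPow_zero, mulConvPow_zero, Measure.dirac_one_mconv, pow_zero, pow_one]
  | succ m ih =>
    have hγ' : (subConv β β ∗ₘ γ) univ ≤ 1 := by
      rw [mconv_apply_univ, subConv_apply_univ]
      exact mul_le_one' (mul_le_one' hβ hβ) hγ
    calc ‖fourierAt (mulConvPow β (m + 1) ∗ₘ γ) ξ‖ ^ 2 ^ (m + 1)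
        = (‖fourierAt ((mulConvPow β m ∗ₘ β) ∗ₘ γ) ξ‖ ^ 2) ^ 2 ^ m := by
          rw [mulConvPow_succ, ← pow_mul, pow_succ']
      _ ≤ ‖fourierAt (mulConvPow β m ∗ₘ (subConv β β ∗ₘ γ)) ξ‖ ^ 2 ^ m := by
          rw [← Measure.mconv_assoc]
          gcongr
          exact sq_norm_fourierAt_mconv_le_norm_fourierAt_mconv_subConv _ _ _
            (mulConvPow_apply_univ_le hβ m) hγ hξ
      _ ≤ ‖fourierAt (mulConvPow (subConv β β) (m + 1) ∗ₘ γ) ξ‖ := by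
          rw [mulConvPow_succ, Measure.mconv_assoc]
          exact ih _ hγ'

end RealAlgebra

/-- For a measure `η` of mass at most one on a real associative algebra
`E`, setting `μ = η*η*η ⊟ η*η*η`, one has
`|(η^{*3m})^(ξ)|^(2^m) ≤ |(μ^{*m})^(ξ)|` for every `m ≥ 1` and every `ξ ∈ E*`. -/
theorem fourier_triple_conv_power_bound
    {E : Type*} [NormedRing E] [NormedAlgebra ℝ E] [FiniteDimensional ℝ E]
    [MeasurableSpace E] [BorelSpace E]
    (η : Measure E) [IsFiniteMeasure η] (hη : η Set.univ ≤ 1) :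
    ∀ m : ℕ, 1 ≤ m → ∀ ξ : E →ₗ[ℝ] ℝ,
      ‖fourierAt (mulConvPow η (3 * m)) ξ‖ ^ (2 ^ m) ≤
        ‖fourierAt (mulConvPow (subConv (mulConvPow η 3) (mulConvPow η 3)) m) ξ‖ := by
  intro m _ ξ
  have h := pow_norm_fourierAt_mulConvPow_mconv_le (mulConvPow η 3)
    (mulConvPow_apply_univ_le hη 3) ξ.continuous_of_finiteDimensional.measurable m
    (Measure.dirac 1) (by simp)
  rwa [Measure.mconv_dirac_one, Measure.mconv_dirac_one, ← mulConvPow_mul] at h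
end

section
/- Let V_1, V_2 be finite-dimensional real inner product spaces and let η_1, η_2 be Borel probability measures on V_1 and V_2 respectively. Let η_1 ⊗̇ η_2 denote the pushforward of η_1 ⊗ η_2 under the bilinear map V_1 × V_2 → V_1 ⊗ V_2. Given ε, κ > 0, for all δ > 0 sufficiently small: if each η_i is supported in the ball of radius δ^{-ε} and satisfies η_i(ρ-neighborhood of any proper affine subspace) ≤ δ^{-ε} ρ^κ for all ρ ≥ δ, then η_1 ⊗̇ η_2 is supported in the ball of radius δ^{-2ε} and satisfies (η_1 ⊗̇ η_2)(ρ-neighborhood of any proper affine subspace of V_1 ⊗ V_2) ≤ C δ^{-2ε} ρ^{κ/2} for all ρ ≥ δ, where C depends only on the dimensions. -/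
/-!
A proper affine subspace of `W = V₁ ⊗ V₂` lies in a hyperplane `φ = c` of a unit functional `φ`,
so its `ρ`-neighbourhood lies in the slab `|φ - c| < ρ`. Parseval in the orthonormal basis
`eᵢ ⊗ fⱼ` gives unit `e, f` with `|φ (e ⊗ f)| ≥ 1/√D`, `D = dim V₁ · dim V₂`. If `(a, b)` lies in
the slab, then either `b` lies in the slab of width `√ρ` of the functional `φ (e ⊗ ·)`, or the
functional `φ (· ⊗ b)` has norm at least `√ρ/√D` and `a` lies in its slab of width `√(Dρ)`.
Fubini adds the two bounds `δ^{-ε} ρ^{κ/2}` and `δ^{-ε} D^{κ/2} ρ^{κ/2}`, and `D^{κ/2} ≤ δ^{-ε}`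
once `δ` is small.
-/

open MeasureTheory Metric

/-- Condition (2) of `ANC(ε, κ)` at scale `δ` is `AffineNonconcentrated μ δ (δ ^ (-ε)) κ`. -/
def AffineNonconcentrated {V : Type*} [NormedAddCommGroup V] [NormedSpace ℝ V] [MeasurableSpace V]
    (μ : Measure V) (δ K κ : ℝ) : Prop :=
  ∀ ρ : ℝ, δ ≤ ρ → ∀ A : AffineSubspace ℝ V, A ≠ ⊤ →
    μ (thickening ρ (A : Set V)) ≤ ENNReal.ofReal (K * ρ ^ κ)

theorem Real.sqrt_div_rpow_le {ρ l D κ : ℝ} (hρ : 0 ≤ ρ) (hl : 0 < l) (hκ : 0 ≤ κ)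
    (h : 1 ≤ D * l ^ 2) : (√ρ / l) ^ κ ≤ D ^ (κ / 2) * ρ ^ (κ / 2) := by
  have hD : 0 ≤ D := nonneg_of_mul_nonneg_left (zero_le_one.trans h) (by positivity)
  have hlκ : l ^ κ = (l ^ 2) ^ (κ / 2) := by
    rw [Real.rpow_div_two_eq_sqrt _ (by positivity), Real.sqrt_sq hl.le]
  rw [Real.div_rpow (Real.sqrt_nonneg _) hl.le, ← Real.rpow_div_two_eq_sqrt _ hρ,
    div_le_iff₀ (by positivity), mul_comm (D ^ _), mul_assoc, hlκ, ← Real.mul_rpow hD (by positivity)]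
  exact le_mul_of_one_le_right (by positivity) (Real.one_le_rpow h (by positivity))

theorem Real.rpow_le_rpow_neg_of_le_rpow_neg {x δ a ε : ℝ} (hx : 0 < x) (hδ : 0 < δ) (hε : 0 < ε)
    (h : δ ≤ x ^ (-(a / ε))) : x ^ a ≤ δ ^ (-ε) := calc
  x ^ a = (x ^ (-(a / ε))) ^ (-ε) := by rw [← Real.rpow_mul hx.le]; field_simp
  _ ≤ δ ^ (-ε) := Real.rpow_le_rpow_of_nonpos hδ h (by linarith)

section Slabs

variable {V : Type*} [NormedAddCommGroup V] [NormedSpace ℝ V]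

theorem mem_thickening_mk'_ker {φ : V →L[ℝ] ℝ} {p a : V} {t : ℝ}
    (ha : |φ a - φ p| < ‖φ‖ * t) :
    a ∈ thickening t (AffineSubspace.mk' p (LinearMap.ker (φ : V →ₗ[ℝ] ℝ)) : Set V) := by
  have ht : 0 < t := pos_of_mul_pos_right ((abs_nonneg _).trans_lt ha) (norm_nonneg φ)
  obtain ⟨x, hx, hφx⟩ := φ.exists_lt_apply_of_lt_opNorm ((div_lt_iff₀ ht).mpr ha)
  have hφx0 : φ x ≠ 0 := norm_pos_iff.mp (lt_of_le_of_lt (by positivity) hφx)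
  set q := a - ((φ a - φ p) / φ x) • x
  refine mem_thickening_iff.mpr ⟨q, ?_, ?_⟩
  · rw [SetLike.mem_coe, AffineSubspace.mem_mk', vsub_eq_sub, LinearMap.mem_ker,
      ContinuousLinearMap.coe_coe, map_sub, map_sub, map_smul, smul_eq_mul, div_mul_cancel₀ _ hφx0]
    ring
  · rw [dist_eq_norm, sub_sub_cancel, norm_smul, norm_div, Real.norm_eq_abs (φ a - φ p)]
    calc |φ a - φ p| / ‖φ x‖ * ‖x‖ ≤ |φ a - φ p| / ‖φ x‖ :=
          mul_le_of_le_one_right (by positivity) hx.le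
      _ < t := (div_lt_iff₀ (by positivity)).mpr (by rwa [div_lt_iff₀ ht, mul_comm] at hφx)

variable [MeasurableSpace V] {μ : Measure V} {δ K κ : ℝ}

theorem AffineNonconcentrated.mono_const (h : AffineNonconcentrated μ δ K κ) (hδ : 0 ≤ δ)
    {K' : ℝ} (hK : K ≤ K') : AffineNonconcentrated μ δ K' κ := fun ρ hρ A hA =>
  (h ρ hρ A hA).trans <| ENNReal.ofReal_le_ofReal <|
    mul_le_mul_of_nonneg_right hK (Real.rpow_nonneg (hδ.trans hρ) κ)

theorem AffineNonconcentrated.measure_abs_sub_lt_le (h : AffineNonconcentrated μ δ K κ)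
    (φ : V →L[ℝ] ℝ) (c : ℝ) {t : ℝ} (ht : δ ≤ t) :
    μ {a | |φ a - c| < ‖φ‖ * t} ≤ ENNReal.ofReal (K * t ^ κ) := by
  rcases eq_or_ne φ 0 with rfl | hφ
  · simp [(abs_nonneg c).not_gt]
  obtain ⟨v, hv⟩ := φ.exists_ne_zero hφ
  have hp : φ ((c / φ v) • v) = c := by rw [map_smul, smul_eq_mul, div_mul_cancel₀ _ hv]
  have hH : AffineSubspace.mk' ((c / φ v) • v) (LinearMap.ker (φ : V →ₗ[ℝ] ℝ)) ≠ ⊤ := by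
    intro htop
    have hker := congrArg AffineSubspace.direction htop
    rw [AffineSubspace.direction_mk', AffineSubspace.direction_top, LinearMap.ker_eq_top] at hker
    exact hv (by simpa using LinearMap.congr_fun hker v)
  refine (measure_mono fun a ha => ?_).trans (h t ht _ hH)
  exact mem_thickening_mk'_ker (hp.symm ▸ ha)

end Slabs

theorem AffineSubspace.exists_thickening_subset_abs_sub_lt {V : Type*} [NormedAddCommGroup V]
    [NormedSpace ℝ V] [FiniteDimensional ℝ V] (A : AffineSubspace ℝ V) (hA : A ≠ ⊤)
    (hne : (A : Set V).Nonempty) :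
    ∃ φ : V →L[ℝ] ℝ, ‖φ‖ = 1 ∧ ∃ c : ℝ,
      ∀ ρ : ℝ, thickening ρ (A : Set V) ⊆ {x | |φ x - c| < ρ} := by
  obtain ⟨p, hp⟩ := hne
  have hdir : A.direction < ⊤ :=
    lt_top_iff_ne_top.mpr fun h => hA ((direction_eq_top_iff_of_nonempty ⟨p, hp⟩).mp h)
  obtain ⟨f, hf, hker⟩ := A.direction.exists_le_ker_of_lt_top hdir
  have hf' : LinearMap.toContinuousLinearMap f ≠ 0 := by simpa using hf
  set φ := ‖LinearMap.toContinuousLinearMap f‖⁻¹ • LinearMap.toContinuousLinearMap f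
  have hφ : ‖φ‖ = 1 := norm_smul_inv_norm hf'
  have hφA : ∀ y ∈ A, φ y = φ p := fun y hy => by
    have hfy : f (y - p) = 0 := hker (vsub_mem_direction hy hp)
    simp [φ, sub_eq_zero.mp (by simpa using hfy)]
  refine ⟨φ, hφ, φ p, fun ρ x hx => ?_⟩
  obtain ⟨y, hy, hxy⟩ := mem_thickening_iff.mp hx
  calc |φ x - φ p| = ‖φ (x - y)‖ := by rw [map_sub, hφA y hy, Real.norm_eq_abs]
    _ ≤ ‖φ‖ * ‖x - y‖ := φ.le_opNorm _
    _ < ρ := by rwa [hφ, one_mul, ← dist_eq_norm]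

theorem MeasureTheory.Measure.prod_apply_le_add_of_forall_notMem {X Y : Type*} [MeasurableSpace X]
    [MeasurableSpace Y] {μ : Measure X} {ν : Measure Y} [IsProbabilityMeasure μ]
    [IsProbabilityMeasure ν] {S : Set (X × Y)} (hS : MeasurableSet S) {B : Set Y}
    (hB : MeasurableSet B) {K : ENNReal} (hK : ∀ y ∉ B, μ ((·, y) ⁻¹' S) ≤ K) :
    μ.prod ν S ≤ ν B + K := by
  rw [Measure.prod_apply_symm hS]
  calc ∫⁻ y, μ ((·, y) ⁻¹' S) ∂ν ≤ ∫⁻ y, B.indicator 1 y + K ∂ν := by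
        refine lintegral_mono fun y => ?_
        by_cases hy : y ∈ B
        · simpa [hy] using le_add_right prob_le_one
        · simpa [hy] using hK y hy
    _ = ν B + K := by
        rw [lintegral_add_right _ measurable_const, lintegral_indicator_one hB, lintegral_const,
          measure_univ, mul_one]

theorem MeasureTheory.Measure.map_prod_apply_compl_eq_zero {X Y Z : Type*} [MeasurableSpace X]
    [MeasurableSpace Y] [MeasurableSpace Z] {μ : Measure X} {ν : Measure Y} [SFinite μ] [SFinite ν]
    {g : X × Y → Z} (hg : Measurable g) {s : Set X} {t : Set Y} {u : Set Z} (hu : MeasurableSet u)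
    (hstu : ∀ x ∈ s, ∀ y ∈ t, g (x, y) ∈ u) (hs : μ sᶜ = 0) (ht : ν tᶜ = 0) :
    (μ.prod ν).map g uᶜ = 0 := by
  rw [Measure.map_apply hg hu.compl]
  refine measure_mono_null (t := (s ×ˢ t)ᶜ) (fun p hp hst => hp (hstu _ hst.1 _ hst.2)) ?_
  rw [Set.compl_prod_eq_union]
  exact measure_union_null (by simp [Measure.prod_prod, hs]) (by simp [Measure.prod_prod, ht])

theorem AffineNonconcentrated.prod_measure_abs_sub_lt_le {V₁ V₂ : Type*}
    [NormedAddCommGroup V₁] [NormedSpace ℝ V₁] [MeasurableSpace V₁] [OpensMeasurableSpace V₁]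
    [NormedAddCommGroup V₂] [NormedSpace ℝ V₂] [MeasurableSpace V₂] [OpensMeasurableSpace V₂]
    [SecondCountableTopologyEither V₁ V₂]
    {η₁ : Measure V₁} {η₂ : Measure V₂} [IsProbabilityMeasure η₁] [IsProbabilityMeasure η₂]
    {δ K₁ K₂ κ₁ κ₂ : ℝ} (h₁ : AffineNonconcentrated η₁ δ K₁ κ₁)
    (h₂ : AffineNonconcentrated η₂ δ K₂ κ₂) (hδ : 0 ≤ δ) (β : V₁ →L[ℝ] V₂ →L[ℝ] ℝ) {e : V₁}
    {f : V₂} (he : ‖e‖ ≤ 1) (hf : ‖f‖ ≤ 1) (c : ℝ) {s t : ℝ} (hs : δ ≤ s) (ht : δ ≤ t) :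
    η₁.prod η₂ {p | |β p.1 p.2 - c| < |β e f| * s * t} ≤
      ENNReal.ofReal (K₂ * s ^ κ₂) + ENNReal.ofReal (K₁ * t ^ κ₁) := by
  have hS : MeasurableSet {p : V₁ × V₂ | |β p.1 p.2 - c| < |β e f| * s * t} :=
    (isOpen_lt (by fun_prop) continuous_const).measurableSet
  have hB : MeasurableSet {b | |β e b - 0| < ‖β e‖ * s} :=
    (isOpen_lt (by fun_prop) continuous_const).measurableSet
  refine (Measure.prod_apply_le_add_of_forall_notMem hS hB fun b hb => ?_).trans
    (add_le_add_left (h₂.measure_abs_sub_lt_le (β e) 0 hs) _)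
  -- a good `b` makes the slice a slab of width `t` for the functional `β · b`
  have hβb : |β e f| * s ≤ ‖β.flip b‖ := calc
    |β e f| * s ≤ ‖β e‖ * s :=
        mul_le_mul_of_nonneg_right ((β e).unit_le_opNorm f hf) (hδ.trans hs)
    _ ≤ |β e b| := by simpa using hb
    _ ≤ ‖β.flip b‖ := by simpa using (β.flip b).unit_le_opNorm e he
  refine (measure_mono fun a ha => ?_).trans (h₁.measure_abs_sub_lt_le (β.flip b) c ht)
  exact ha.trans_le (mul_le_mul_of_nonneg_right hβb (hδ.trans ht))

section IsometricTensor

variable {V₁ V₂ W : Type*} [NormedAddCommGroup V₁] [InnerProductSpace ℝ V₁]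
  [NormedAddCommGroup V₂] [InnerProductSpace ℝ V₂] [NormedAddCommGroup W] [InnerProductSpace ℝ W]
  (ι : V₁ →ₗ[ℝ] V₂ →ₗ[ℝ] W)

theorem norm_apply_apply_of_inner
    (hι : ∀ (a c : V₁) (b d : V₂), (inner ℝ (ι a b) (ι c d) : ℝ) = inner ℝ a c * inner ℝ b d)
    (a : V₁) (b : V₂) : ‖ι a b‖ = ‖a‖ * ‖b‖ := by
  have h := hι a a b b
  simp only [real_inner_self_eq_norm_sq] at h
  rw [← mul_pow] at h
  exact (pow_left_inj₀ (norm_nonneg _) (by positivity) two_ne_zero).mp h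

theorem continuous_apply_apply_of_inner
    (hι : ∀ (a c : V₁) (b d : V₂), (inner ℝ (ι a b) (ι c d) : ℝ) = inner ℝ a c * inner ℝ b d) :
    Continuous fun p : V₁ × V₂ => ι p.1 p.2 := by
  have hb : ∀ a b, ‖ι a b‖ ≤ 1 * ‖a‖ * ‖b‖ := fun a b => by
    rw [one_mul, norm_apply_apply_of_inner ι hι]
  exact (ι.mkContinuous₂ 1 hb).continuous₂

theorem orthonormal_apply_apply
    (hι : ∀ (a c : V₁) (b d : V₂), (inner ℝ (ι a b) (ι c d) : ℝ) = inner ℝ a c * inner ℝ b d)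
    {ι₁ ι₂ : Type*} {e : ι₁ → V₁} {f : ι₂ → V₂} (he : Orthonormal ℝ e) (hf : Orthonormal ℝ f) :
    Orthonormal ℝ fun p : ι₁ × ι₂ => ι (e p.1) (f p.2) := by
  classical
  rw [orthonormal_iff_ite] at he hf ⊢
  rintro ⟨i, j⟩ ⟨i', j'⟩
  simp only [hι, he, hf, Prod.mk.injEq]
  split_ifs <;> simp_all

theorem top_le_span_range_apply_apply (hspan : Submodule.span ℝ {w : W | ∃ a b, w = ι a b} = ⊤)
    {ι₁ ι₂ : Type*} {e : ι₁ → V₁} {f : ι₂ → V₂} (he : ⊤ ≤ Submodule.span ℝ (Set.range e))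
    (hf : ⊤ ≤ Submodule.span ℝ (Set.range f)) :
    ⊤ ≤ Submodule.span ℝ (Set.range fun p : ι₁ × ι₂ => ι (e p.1) (f p.2)) := by
  rw [← hspan, Submodule.span_le]
  rintro _ ⟨a, b, rfl⟩
  have hab := Submodule.apply_mem_map₂ ι (m := a) (n := b) (he Submodule.mem_top)
    (hf Submodule.mem_top)
  rwa [Submodule.map₂_span_span, Set.image2_range] at hab

theorem exists_sq_opNorm_le_mul_sq_apply_apply [FiniteDimensional ℝ V₁] [FiniteDimensional ℝ V₂]
    [CompleteSpace W]
    (hι : ∀ (a c : V₁) (b d : V₂), (inner ℝ (ι a b) (ι c d) : ℝ) = inner ℝ a c * inner ℝ b d)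
    (hspan : Submodule.span ℝ {w : W | ∃ a b, w = ι a b} = ⊤) (φ : W →L[ℝ] ℝ) :
    ∃ (e : V₁) (f : V₂), ‖e‖ ≤ 1 ∧ ‖f‖ ≤ 1 ∧
      ‖φ‖ ^ 2 ≤ (Module.finrank ℝ V₁ * Module.finrank ℝ V₂ : ℝ) * φ (ι e f) ^ 2 := by
  set e := stdOrthonormalBasis ℝ V₁
  set f := stdOrthonormalBasis ℝ V₂
  let B : OrthonormalBasis _ ℝ W := .mk (orthonormal_apply_apply ι hι e.orthonormal f.orthonormal)
    (top_le_span_range_apply_apply ι hspan (by simpa using e.toBasis.span_eq.ge)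
      (by simpa using f.toBasis.span_eq.ge))
  -- Parseval for the Riesz representative of `φ`
  have hparseval : ∑ p, φ (B p) ^ 2 = ‖φ‖ ^ 2 := by
    simpa [InnerProductSpace.toDual_symm_apply] using
      B.sum_sq_inner_left ((InnerProductSpace.toDual ℝ W).symm φ)
  rcases isEmpty_or_nonempty (Fin (Module.finrank ℝ V₁) × Fin (Module.finrank ℝ V₂)) with hE | hE
  · refine ⟨0, 0, by simp, by simp, ?_⟩
    simp [← hparseval]
  obtain ⟨p, -, hp⟩ := Finset.univ.exists_max_image (fun p => φ (B p) ^ 2) Finset.univ_nonempty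
  refine ⟨e p.1, f p.2, e.orthonormal.1 _ |>.le, f.orthonormal.1 _ |>.le, ?_⟩
  calc ‖φ‖ ^ 2 = ∑ p, φ (B p) ^ 2 := hparseval.symm
    _ ≤ Finset.univ.card • φ (B p) ^ 2 := Finset.sum_le_card_nsmul _ _ _ fun q _ => hp q (by simp)
    _ = _ := by simp [B]

theorem AffineNonconcentrated.map_prod_tensor [FiniteDimensional ℝ V₁] [FiniteDimensional ℝ V₂]
    [FiniteDimensional ℝ W] [MeasurableSpace V₁] [OpensMeasurableSpace V₁] [MeasurableSpace V₂]
    [OpensMeasurableSpace V₂] [MeasurableSpace W] [BorelSpace W]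
    (hι : ∀ (a c : V₁) (b d : V₂), (inner ℝ (ι a b) (ι c d) : ℝ) = inner ℝ a c * inner ℝ b d)
    (hspan : Submodule.span ℝ {w : W | ∃ a b, w = ι a b} = ⊤) {η₁ : Measure V₁}
    {η₂ : Measure V₂} [IsProbabilityMeasure η₁] [IsProbabilityMeasure η₂] {δ K κ : ℝ}
    (h₁ : AffineNonconcentrated η₁ δ K κ) (h₂ : AffineNonconcentrated η₂ δ K κ) (hδ : 0 < δ)
    (hδ1 : δ ≤ 1) (hK : 0 ≤ K) (hκ : 0 ≤ κ) :
    AffineNonconcentrated ((η₁.prod η₂).map fun p => ι p.1 p.2) δ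
      (K * (1 + (Module.finrank ℝ V₁ * Module.finrank ℝ V₂ : ℝ) ^ (κ / 2))) (κ / 2) := by
  intro ρ hρ A hA
  rcases (A : Set W).eq_empty_or_nonempty with hA₀ | hne
  · simp [hA₀]
  obtain ⟨φ, hφ, c, hsub⟩ := A.exists_thickening_subset_abs_sub_lt hA hne
  obtain ⟨e, f, he, hf, hef⟩ := exists_sq_opNorm_le_mul_sq_apply_apply ι hι hspan φ
  set D : ℝ := Module.finrank ℝ V₁ * Module.finrank ℝ V₂
  let β : V₁ →L[ℝ] V₂ →L[ℝ] ℝ := (ι.compr₂ (φ : W →ₗ[ℝ] ℝ)).mkContinuous₂ ‖φ‖ fun a b => by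
    simpa [norm_apply_apply_of_inner ι hι, mul_assoc] using φ.le_opNorm (ι a b)
  set l := |β e f|
  have hl1 : l ≤ 1 := calc
    l ≤ ‖φ‖ * ‖ι e f‖ := φ.le_opNorm _
    _ ≤ 1 := by
      rw [hφ, one_mul, norm_apply_apply_of_inner ι hι]
      exact mul_le_one₀ he (norm_nonneg _) hf
  have hDl : 1 ≤ D * l ^ 2 := by simpa [l, β, hφ] using hef
  have hl0 : 0 < l := abs_pos.mpr fun h => by norm_num [l, h] at hDl
  have hρ₀ : 0 ≤ ρ := hδ.le.trans hρ
  have hδs : δ ≤ √ρ := (Real.le_sqrt hδ.le hρ₀).mpr (by nlinarith)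
  have hδt : δ ≤ √ρ / l := hδs.trans (le_div_self (Real.sqrt_nonneg _) hl0 hl1)
  have hlρ : l * √ρ * (√ρ / l) = ρ := by
    rw [mul_comm l, mul_assoc, mul_div_cancel₀ _ hl0.ne', Real.mul_self_sqrt hρ₀]
  rw [Measure.map_apply (continuous_apply_apply_of_inner ι hι).measurable
    isOpen_thickening.measurableSet]
  calc _ ≤ η₁.prod η₂ {p | |β p.1 p.2 - c| < l * √ρ * (√ρ / l)} := measure_mono fun p hp => by
          simpa [hlρ, β] using hsub ρ hp
    _ ≤ _ := h₁.prod_measure_abs_sub_lt_le h₂ hδ.le β he hf c hδs hδt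
    _ ≤ ENNReal.ofReal (K * ρ ^ (κ / 2)) + ENNReal.ofReal (K * (D ^ (κ / 2) * ρ ^ (κ / 2))) := by
          rw [← Real.rpow_div_two_eq_sqrt _ hρ₀]
          gcongr
          exact Real.sqrt_div_rpow_le hρ₀ hl0 hκ hDl
    _ = _ := by rw [← ENNReal.ofReal_add (by positivity) (by positivity)]; ring_nf

end IsometricTensor

/-- Affine non-concentration passes to the tensor product: if `η₁, η₂`
are probability measures on Euclidean spaces `V₁, V₂` satisfying `ANC(ε, κ)` at scale
`δ`, then the pushforward `η₁ ⊗̇ η₂` on `V₁ ⊗ V₂` (modelled by a Euclidean space `W`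
with an inner-product-compatible bilinear map `ι` of full span) satisfies
`ANC`-type bounds with parameters `(2ε, κ/2)`, with a constant depending only on the
dimensions. -/
theorem tensor_affine_nonconcentration
    {V₁ V₂ W : Type*}
    [NormedAddCommGroup V₁] [InnerProductSpace ℝ V₁] [FiniteDimensional ℝ V₁]
    [NormedAddCommGroup V₂] [InnerProductSpace ℝ V₂] [FiniteDimensional ℝ V₂]
    [NormedAddCommGroup W] [InnerProductSpace ℝ W] [FiniteDimensional ℝ W]
    [MeasurableSpace V₁] [BorelSpace V₁] [MeasurableSpace V₂] [BorelSpace V₂]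
    [MeasurableSpace W] [BorelSpace W]
    -- `ι` models the canonical bilinear map `V₁ × V₂ → V₁ ⊗ V₂` with its Euclidean structure
    (ι : V₁ →ₗ[ℝ] V₂ →ₗ[ℝ] W)
    (hι : ∀ (a c : V₁) (b d : V₂), (inner ℝ (ι a b) (ι c d) : ℝ) = inner ℝ a c * inner ℝ b d)
    (hspan : Submodule.span ℝ {w : W | ∃ a b, w = ι a b} = ⊤) :
    ∃ C : ℝ, 0 < C ∧
      ∀ ε κ : ℝ, 0 < ε → 0 < κ →
        ∃ δ₀ : ℝ, 0 < δ₀ ∧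
          ∀ δ : ℝ, 0 < δ → δ ≤ δ₀ →
            ∀ (η₁ : Measure V₁) (η₂ : Measure V₂),
              IsProbabilityMeasure η₁ → IsProbabilityMeasure η₂ →
              -- `η₁` satisfies ANC(ε, κ) at scale δ
              η₁ (Metric.closedBall 0 (δ ^ (-ε)))ᶜ = 0 →
              (∀ ρ : ℝ, δ ≤ ρ → ∀ Waff : AffineSubspace ℝ V₁, Waff ≠ ⊤ →
                η₁ (Metric.thickening ρ (Waff : Set V₁)) ≤ ENNReal.ofReal (δ ^ (-ε) * ρ ^ κ)) →
              -- `η₂` satisfies ANC(ε, κ) at scale δ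
              η₂ (Metric.closedBall 0 (δ ^ (-ε)))ᶜ = 0 →
              (∀ ρ : ℝ, δ ≤ ρ → ∀ Waff : AffineSubspace ℝ V₂, Waff ≠ ⊤ →
                η₂ (Metric.thickening ρ (Waff : Set V₂)) ≤ ENNReal.ofReal (δ ^ (-ε) * ρ ^ κ)) →
              -- conclusion for `η₁ ⊗̇ η₂`
              (Measure.map (fun p : V₁ × V₂ => ι p.1 p.2) (η₁.prod η₂))
                  (Metric.closedBall 0 (δ ^ (-(2 * ε))))ᶜ = 0 ∧
              ∀ ρ : ℝ, δ ≤ ρ → ∀ Waff : AffineSubspace ℝ W, Waff ≠ ⊤ →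
                (Measure.map (fun p : V₁ × V₂ => ι p.1 p.2) (η₁.prod η₂))
                    (Metric.thickening ρ (Waff : Set W)) ≤
                  ENNReal.ofReal (C * δ ^ (-(2 * ε)) * ρ ^ (κ / 2)) := by
  set D : ℝ := Module.finrank ℝ V₁ * Module.finrank ℝ V₂
  refine ⟨2, two_pos, fun ε κ hε hκ => ⟨min 1 ((D + 1) ^ (-(κ / 2 / ε))), by positivity, ?_⟩⟩
  intro δ hδ hδ₀ η₁ η₂ _ _ hs₁ h₁ hs₂ h₂
  have hδ1 : δ ≤ 1 := hδ₀.trans (min_le_left _ _)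
  have hK : 1 ≤ δ ^ (-ε) := Real.one_le_rpow_of_pos_of_le_one_of_nonpos hδ hδ1 (by linarith)
  have hK2 : δ ^ (-(2 * ε)) = δ ^ (-ε) * δ ^ (-ε) := by rw [← Real.rpow_add hδ]; ring_nf
  have hD : D ^ (κ / 2) ≤ δ ^ (-ε) := calc
    D ^ (κ / 2) ≤ (D + 1) ^ (κ / 2) := by gcongr; linarith
    _ ≤ δ ^ (-ε) := Real.rpow_le_rpow_neg_of_le_rpow_neg (by positivity) hδ hε
      (hδ₀.trans (min_le_right _ _))
  refine ⟨Measure.map_prod_apply_compl_eq_zero (continuous_apply_apply_of_inner ι hι).measurable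
    isClosed_closedBall.measurableSet (fun a ha b hb => ?_) hs₁ hs₂, ?_⟩
  · rw [mem_closedBall_zero_iff, norm_apply_apply_of_inner ι hι, hK2]
    exact mul_le_mul (mem_closedBall_zero_iff.mp ha) (mem_closedBall_zero_iff.mp hb)
      (norm_nonneg _) (by positivity)
  · refine (AffineNonconcentrated.map_prod_tensor ι hι hspan h₁ h₂ hδ hδ1 (by positivity)
      hκ.le).mono_const hδ.le ?_
    rw [hK2]
    nlinarith
end

section
/- Let μ be a Borel probability measure on SL_d(ℤ) and ν a Borel probability measure on 𝕋^d. Suppose |(μ*ν)^∧(a_0)| ≥ t_0 > 0 for some a_0 ∈ ℤ^d, where μ*ν is the pushforward of μ⊗ν under (g,x) ↦ gx. Then for every integer k ≥ 1, the set A = {g ∈ Mat_d(ℤ) : |ν̂(a_0 g)| ≥ t_0^{2k}/2} satisfies (μ^{⊞k} ⊟ μ^{⊞k})(A) ≥ t_0^{2k}/2, where μ^{⊞k} is the k-fold additive convolution of μ (viewed as a measure on Mat_d(ℤ)) and ⊟ is the difference convolution. -/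
open MeasureTheory

instance matIntMeasurableSpace (d : ℕ) :
    MeasurableSpace (Matrix (Fin d) (Fin d) ℤ) := ⊤

instance slIntMeasurableSpace (d : ℕ) :
    MeasurableSpace (Matrix.SpecialLinearGroup (Fin d) ℤ) := ⊤

/-- The Fourier coefficient of a measure `ν` on the torus `𝕋^d = (ℝ/ℤ)^d` at a
frequency `a ∈ ℤ^d`. -/
noncomputable def torusFourier {d : ℕ} (ν : Measure (Fin d → AddCircle (1 : ℝ)))
    (a : Fin d → ℤ) : ℂ :=
  ∫ x, ∏ i, fourier (a i) (x i) ∂ν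

/-- The action convolution `μ * ν` on the torus: image of `μ ⊗ ν` under `(g, x) ↦ gx`. -/
noncomputable def actConv {d : ℕ} (μ : Measure (Matrix.SpecialLinearGroup (Fin d) ℤ))
    (ν : Measure (Fin d → AddCircle (1 : ℝ))) : Measure (Fin d → AddCircle (1 : ℝ)) :=
  Measure.map (fun p : Matrix.SpecialLinearGroup (Fin d) ℤ × (Fin d → AddCircle (1 : ℝ)) => fun i => ∑ j, ((p.1 : Matrix (Fin d) (Fin d) ℤ) i j) • p.2 j)
    (μ.prod ν)

/-- The `k`-fold additive convolution `μ^{⊞k}` of a measure on `SL_d(ℤ)`, viewed as a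
measure on `Mat_d(ℤ)`: image of `μ^{⊗k}` under `(g₁, …, g_k) ↦ g₁ + ⋯ + g_k`. -/
noncomputable def addConvPow {d : ℕ} (μ : Measure (Matrix.SpecialLinearGroup (Fin d) ℤ))
    (k : ℕ) : Measure (Matrix (Fin d) (Fin d) ℤ) :=
  Measure.map (fun v : Fin k → Matrix.SpecialLinearGroup (Fin d) ℤ =>
    ∑ i, ((v i : Matrix (Fin d) (Fin d) ℤ))) (Measure.pi fun _ => μ)

/-!
Write `F x = ∫ e(⟨a₀ g, x⟩) dμ(g)`, so that `(μ*ν)^(a₀) = ∫ F dν`; Jensen gives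
`t₀^{2k} ≤ ∫ |F|^{2k} dν`. Since `e(⟨a₀ g, x⟩)` is a character in `g`, `F^k` is the same integral
over `μ^{⊞k}` and `|F|^{2k} = |F^k|^2` the same integral over `μ^{⊞k} ⊟ μ^{⊞k}`; integrating in `x`
first identifies the moment with the mean of `ν̂(a₀ g)` over `g ∼ μ^{⊞k} ⊟ μ^{⊞k}`. As
`|ν̂| ≤ 1`, a mean of at least `t₀^{2k}` forces `|ν̂(a₀ g)| ≥ t₀^{2k}/2` on a set of measure at
least `t₀^{2k}/2`.
-/

open scoped ComplexConjugate Matrix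

instance (d : ℕ) : Countable (Matrix (Fin d) (Fin d) ℤ) :=
  inferInstanceAs (Countable (Fin d → Fin d → ℤ))

instance (d : ℕ) : DiscreteMeasurableSpace (Matrix (Fin d) (Fin d) ℤ) :=
  ⟨fun _ => trivial⟩

instance (d : ℕ) : Countable (Matrix.SpecialLinearGroup (Fin d) ℤ) :=
  inferInstanceAs (Countable {A : Matrix (Fin d) (Fin d) ℤ // A.det = 1})

instance (d : ℕ) : DiscreteMeasurableSpace (Matrix.SpecialLinearGroup (Fin d) ℤ) :=
  ⟨fun _ => trivial⟩

theorem AddChar.map_sum_eq_prod {A M : Type*} [AddCommMonoid A] [CommMonoid M] (ψ : AddChar A M)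
    {ι : Type*} (s : Finset ι) (a : ι → A) : ψ (∑ i ∈ s, a i) = ∏ i ∈ s, ψ (a i) :=
  map_prod ψ.toMonoidHom (fun i => Multiplicative.ofAdd (a i)) s

section TorusCharacter

variable {ι : Type*} [Fintype ι] {T : ℝ}

/-- The character `a ↦ e(⟨a, x⟩)` of `ℤ^ι` attached to a point `x` of the torus. -/
noncomputable def torusChar (x : ι → AddCircle T) : AddChar (ι → ℤ) ℂ where
  toFun a := ∏ i, fourier (a i) (x i)
  map_zero_eq_one' := by simp
  map_add_eq_mul' a b := by simp [Finset.prod_mul_distrib]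

theorem torusChar_apply (x : ι → AddCircle T) (a : ι → ℤ) :
    torusChar x a = ∏ i, fourier (a i) (x i) := rfl

theorem torusChar_eq_toCircle (x : ι → AddCircle T) (a : ι → ℤ) :
    torusChar x a = AddCircle.toCircle (∑ i, a i • x i) := by
  have h := AddCircle.toCircle_addChar.map_sum_eq_prod Finset.univ fun i => a i • x i
  simp only [AddCircle.toCircle_addChar, AddChar.coe_mk] at h
  simp only [torusChar_apply, fourier_apply, h]
  exact (map_prod Circle.coeHom _ _).symm

theorem norm_torusChar (x : ι → AddCircle T) (a : ι → ℤ) : ‖torusChar x a‖ = 1 := by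
  rw [torusChar_eq_toCircle, Circle.norm_coe]

theorem torusChar_sub (x : ι → AddCircle T) (a b : ι → ℤ) :
    torusChar x (a - b) = torusChar x a * conj (torusChar x b) := by
  rw [AddChar.map_sub_eq_div, div_eq_mul_inv, RCLike.inv_eq_conj (norm_torusChar x b)]

theorem continuous_torusChar (a : ι → ℤ) : Continuous fun x : ι → AddCircle T => torusChar x a :=
  continuous_finsetProd _ fun i _ => (fourier (a i)).continuous.comp (continuous_apply i)

theorem torusChar_mulVec (m : Matrix ι ι ℤ) (x : ι → AddCircle T) (a : ι → ℤ) :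
    torusChar (fun i => ∑ j, m i j • x j) a = torusChar x (a ᵥ* m) := by
  simp only [torusChar_eq_toCircle, Finset.smul_sum, smul_smul, Matrix.vecMul, dotProduct,
    Finset.sum_smul]
  rw [Finset.sum_comm]

theorem measurable_torusChar_comp {α : Type*} [MeasurableSpace α] [Countable α]
    [MeasurableSingletonClass α] (c : α → ι → ℤ) :
    Measurable fun p : α × (ι → AddCircle T) => torusChar p.2 (c p.1) :=
  measurable_from_prod_countable_right fun g => (continuous_torusChar (c g)).measurable

end TorusCharacter

section Probability

variable {α : Type*} [MeasurableSpace α] {μ : Measure α}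

theorem norm_integral_le_one [IsProbabilityMeasure μ] {E : Type*} [NormedAddCommGroup E]
    [NormedSpace ℝ E] {f : α → E} (hf : ∀ x, ‖f x‖ ≤ 1) : ‖∫ x, f x ∂μ‖ ≤ 1 := by
  simpa using norm_integral_le_of_norm_le_const (μ := μ) (.of_forall hf)

theorem pow_integral_norm_le_integral_norm_pow [IsProbabilityMeasure μ] {E : Type*}
    [NormedAddCommGroup E] {f : α → E} (hf : AEStronglyMeasurable f μ) {C : ℝ}
    (hC : ∀ x, ‖f x‖ ≤ C) (n : ℕ) : (∫ x, ‖f x‖ ∂μ) ^ n ≤ ∫ x, ‖f x‖ ^ n ∂μ :=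
  (convexOn_pow n).map_integral_le (continuous_pow n).continuousOn isClosed_Ici
    (.of_forall fun x => norm_nonneg (f x))
    (.of_bound hf.norm C (.of_forall fun x => by simpa using hC x))
    (.of_bound (hf.norm.pow n) (C ^ n) (.of_forall fun x => by
      simpa using pow_le_pow_left₀ (norm_nonneg _) (hC x) n))

theorem ofReal_integral_sub_le_measure_le [IsProbabilityMeasure μ] {f : α → ℝ}
    (hfm : Measurable f) (hf : Integrable f μ) (hf1 : ∀ x, f x ≤ 1) {s : ℝ} (hs : 0 ≤ s) :
    ENNReal.ofReal (∫ x, f x ∂μ - s) ≤ μ {x | s ≤ f x} := by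
  set A := {x | s ≤ f x}
  have hA : MeasurableSet A := measurableSet_le measurable_const hfm
  have hle : ∀ x, f x ≤ A.indicator 1 x + s := by
    intro x
    by_cases hx : x ∈ A
    · simpa [Set.indicator_of_mem hx] using (hf1 x).trans (le_add_of_nonneg_right hs)
    · simpa [Set.indicator_of_notMem hx] using (not_le.mp hx).le
  have hint : ∫ x, f x ∂μ ≤ μ.real A + s := by
    calc ∫ x, f x ∂μ ≤ ∫ x, (A.indicator 1 x + s) ∂μ :=
          integral_mono hf (((integrable_const 1).indicator hA).add (integrable_const s)) hle
      _ = μ.real A + s := by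
          rw [integral_add (f := A.indicator 1) ((integrable_const 1).indicator hA)
            (integrable_const s), integral_indicator_one hA]
          simp
  exact ENNReal.ofReal_le_of_le_toReal (by rw [← measureReal_def]; linarith)

theorem integral_prod_mul_conj {𝕜 : Type*} [RCLike 𝕜] [SFinite μ] (f : α → 𝕜) :
    ∫ p, f p.1 * conj (f p.2) ∂(μ.prod μ) = (‖∫ x, f x ∂μ‖ : 𝕜) ^ 2 := by
  rw [integral_prod_mul f (conj <| f ·), integral_conj, RCLike.mul_conj]

end Probability

section TorusFourier

variable {d : ℕ}

theorem torusFourier_eq_integral_torusChar (ν : Measure (Fin d → AddCircle (1 : ℝ)))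
    (a : Fin d → ℤ) : torusFourier ν a = ∫ x, torusChar x a ∂ν := rfl

theorem norm_torusFourier_le_one (ν : Measure (Fin d → AddCircle (1 : ℝ)))
    [IsProbabilityMeasure ν] (a : Fin d → ℤ) : ‖torusFourier ν a‖ ≤ 1 :=
  norm_integral_le_one fun x => (norm_torusChar x a).le

theorem integrable_torusChar_comp {α : Type*} [MeasurableSpace α] [Countable α]
    [MeasurableSingletonClass α] (P : Measure (α × (Fin d → AddCircle (1 : ℝ))))
    [IsFiniteMeasure P] (c : α → Fin d → ℤ) :
    Integrable (fun p => torusChar p.2 (c p.1)) P :=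
  .of_bound (measurable_torusChar_comp c).aestronglyMeasurable 1
    (.of_forall fun _ => (norm_torusChar _ _).le)

theorem stronglyMeasurable_integral_torusChar {α : Type*} [MeasurableSpace α] [Countable α]
    [MeasurableSingletonClass α] (P : Measure α) [SFinite P] (c : α → Fin d → ℤ) :
    StronglyMeasurable fun x : Fin d → AddCircle (1 : ℝ) => ∫ ω, torusChar x (c ω) ∂P :=
  (measurable_torusChar_comp c).stronglyMeasurable.integral_prod_left'

theorem torusFourier_actConv (μ : Measure (Matrix.SpecialLinearGroup (Fin d) ℤ))
    [IsFiniteMeasure μ] (ν : Measure (Fin d → AddCircle (1 : ℝ))) [IsFiniteMeasure ν]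
    (a : Fin d → ℤ) :
    torusFourier (actConv μ ν) a = ∫ x, ∫ g, torusChar x (a ᵥ* ↑g) ∂μ ∂ν := by
  have hact : Measurable
      fun p : Matrix.SpecialLinearGroup (Fin d) ℤ × (Fin d → AddCircle (1 : ℝ)) =>
        fun i => ∑ j, ((p.1 : Matrix (Fin d) (Fin d) ℤ) i j) • p.2 j :=
    measurable_from_prod_countable_right fun g => Continuous.measurable (by fun_prop)
  rw [torusFourier_eq_integral_torusChar, actConv,
    integral_map hact.aemeasurable (continuous_torusChar a).aestronglyMeasurable]
  simp only [torusChar_mulVec]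
  exact integral_prod_symm _ (integrable_torusChar_comp (μ.prod ν) fun g => a ᵥ* ↑g)

theorem integral_integral_torusChar_swap {α : Type*} [MeasurableSpace α] [Countable α]
    [MeasurableSingletonClass α] (P : Measure α) [IsFiniteMeasure P]
    (ν : Measure (Fin d → AddCircle (1 : ℝ))) [IsFiniteMeasure ν] (c : α → Fin d → ℤ) :
    ∫ x, ∫ ω, torusChar x (c ω) ∂P ∂ν = ∫ ω, torusFourier ν (c ω) ∂P :=
  (integral_integral_swap (integrable_torusChar_comp (P.prod ν) c)).symm

end TorusFourier

section AdditiveConvolution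

variable {d : ℕ}

instance (μ : Measure (Matrix.SpecialLinearGroup (Fin d) ℤ)) [IsProbabilityMeasure μ] (k : ℕ) :
    IsProbabilityMeasure (addConvPow μ k) :=
  Measure.isProbabilityMeasure_map Measurable.of_discrete.aemeasurable

theorem integral_torusChar_addConvPow (μ : Measure (Matrix.SpecialLinearGroup (Fin d) ℤ))
    [SigmaFinite μ] (k : ℕ) (x : Fin d → AddCircle (1 : ℝ)) (a : Fin d → ℤ) :
    ∫ g, torusChar x (a ᵥ* g) ∂(addConvPow μ k) = (∫ g, torusChar x (a ᵥ* ↑g) ∂μ) ^ k := by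
  rw [addConvPow, integral_map Measurable.of_discrete.aemeasurable
    Measurable.of_discrete.aestronglyMeasurable]
  simp only [Matrix.vecMul_sum, AddChar.map_sum_eq_prod]
  exact (integral_fintype_prod_eq_pow (ι := Fin k) (μ := μ)
    (fun g : Matrix.SpecialLinearGroup (Fin d) ℤ => torusChar x (a ᵥ* ↑g))).trans
    (by rw [Fintype.card_fin])

theorem integral_torusChar_map_sub_prod (m : Measure (Matrix (Fin d) (Fin d) ℤ)) [SFinite m]
    (x : Fin d → AddCircle (1 : ℝ)) (a : Fin d → ℤ) :
    ∫ g : Matrix (Fin d) (Fin d) ℤ, torusChar x (a ᵥ* g) ∂(Measure.map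
        (fun p : Matrix (Fin d) (Fin d) ℤ × Matrix (Fin d) (Fin d) ℤ => p.1 - p.2) (m.prod m))
      = (‖∫ g, torusChar x (a ᵥ* g) ∂m‖ : ℂ) ^ 2 := by
  rw [integral_map Measurable.of_discrete.aemeasurable
    Measurable.of_discrete.aestronglyMeasurable]
  simp only [Matrix.vecMul_sub, torusChar_sub]
  exact integral_prod_mul_conj (μ := m) fun g => torusChar x (a ᵥ* g)

theorem ofReal_integral_norm_pow_eq_integral_torusFourier
    (μ : Measure (Matrix.SpecialLinearGroup (Fin d) ℤ)) [IsProbabilityMeasure μ]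
    (ν : Measure (Fin d → AddCircle (1 : ℝ))) [IsFiniteMeasure ν] (k : ℕ) (a : Fin d → ℤ) :
    ((∫ x, ‖∫ g, torusChar x (a ᵥ* ↑g) ∂μ‖ ^ (2 * k) ∂ν : ℝ) : ℂ)
      = ∫ g, torusFourier ν (a ᵥ* g) ∂(Measure.map
          (fun p : Matrix (Fin d) (Fin d) ℤ × Matrix (Fin d) (Fin d) ℤ => p.1 - p.2)
          ((addConvPow μ k).prod (addConvPow μ k))) := by
  rw [← integral_integral_torusChar_swap]
  refine integral_ofReal.symm.trans (integral_congr_ae (.of_forall fun x => ?_))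
  beta_reduce
  rw [integral_torusChar_map_sub_prod, integral_torusChar_addConvPow, norm_pow, pow_mul']
  norm_cast

end AdditiveConvolution

/-- large Fourier coefficients have additive structure; Lemma 4.3 of
He–de Saxcé. If `|(μ*ν)^(a₀)| ≥ t₀ > 0`, then for every `k ≥ 1` the set
`A = {g ∈ Mat_d(ℤ) : |ν̂(a₀ g)| ≥ t₀^{2k}/2}` has
`(μ^{⊞k} ⊟ μ^{⊞k})(A) ≥ t₀^{2k}/2`. -/
theorem additive_structure_of_large_fourier_coefficients
    {d : ℕ} (μ : Measure (Matrix.SpecialLinearGroup (Fin d) ℤ)) [IsProbabilityMeasure μ]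
    (ν : Measure (Fin d → AddCircle (1 : ℝ))) [IsProbabilityMeasure ν]
    (a₀ : Fin d → ℤ) (t₀ : ℝ) (ht₀ : 0 < t₀)
    (hbig : t₀ ≤ ‖torusFourier (actConv μ ν) a₀‖) :
    ∀ k : ℕ, 1 ≤ k →
      ENNReal.ofReal (t₀ ^ (2 * k) / 2) ≤
        (Measure.map (fun p : Matrix (Fin d) (Fin d) ℤ × Matrix (Fin d) (Fin d) ℤ =>
            p.1 - p.2) ((addConvPow μ k).prod (addConvPow μ k)))
          {g : Matrix (Fin d) (Fin d) ℤ |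
            t₀ ^ (2 * k) / 2 ≤ ‖torusFourier ν (fun j => ∑ i, a₀ i * g i j)‖} := by
  intro k _
  set lam := Measure.map (fun p : Matrix (Fin d) (Fin d) ℤ × Matrix (Fin d) (Fin d) ℤ =>
    p.1 - p.2) ((addConvPow μ k).prod (addConvPow μ k))
  have : IsProbabilityMeasure lam :=
    Measure.isProbabilityMeasure_map Measurable.of_discrete.aemeasurable
  set F : (Fin d → AddCircle (1 : ℝ)) → ℂ := fun x => ∫ g, torusChar x (a₀ ᵥ* ↑g) ∂μ
  have hmean : t₀ ≤ ∫ x, ‖F x‖ ∂ν :=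
    hbig.trans (by rw [torusFourier_actConv]; exact norm_integral_le_integral_norm _)
  have hlam : t₀ ^ (2 * k) ≤ ∫ g, ‖torusFourier ν (a₀ ᵥ* g)‖ ∂lam :=
    calc t₀ ^ (2 * k) ≤ (∫ x, ‖F x‖ ∂ν) ^ (2 * k) := pow_le_pow_left₀ ht₀.le hmean _
      _ ≤ ∫ x, ‖F x‖ ^ (2 * k) ∂ν :=
          pow_integral_norm_le_integral_norm_pow
            (stronglyMeasurable_integral_torusChar μ _).aestronglyMeasurable
            (fun x => norm_integral_le_one fun g => (norm_torusChar _ _).le) _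
      _ = ‖((∫ x, ‖F x‖ ^ (2 * k) ∂ν : ℝ) : ℂ)‖ := by
          rw [Complex.norm_real, Real.norm_of_nonneg (integral_nonneg fun _ => by positivity)]
      _ = ‖∫ g, torusFourier ν (a₀ ᵥ* g) ∂lam‖ := by
          rw [ofReal_integral_norm_pow_eq_integral_torusFourier]
      _ ≤ ∫ g, ‖torusFourier ν (a₀ ᵥ* g)‖ ∂lam := norm_integral_le_integral_norm _
  change ENNReal.ofReal _ ≤ lam {g | _ ≤ ‖torusFourier ν (a₀ ᵥ* g)‖}
  refine (ENNReal.ofReal_le_ofReal (by linarith)).trans <|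
    ofReal_integral_sub_le_measure_le Measurable.of_discrete
      (.of_bound Measurable.of_discrete.aestronglyMeasurable 1
        (.of_forall fun g => by simpa using norm_torusFourier_le_one ν _))
      (fun g => norm_torusFourier_le_one ν (a₀ ᵥ* g)) (by positivity)
end

section
/- Let V be a finite-dimensional real vector space, A ⊆ V × V' a set (V' another space), φ : V × V' → W a map to a Euclidean space W, and δ > 0. Define the energy E_δ(φ, A) as the covering number at scale δ of {(a,a') ∈ A × A : ‖φ(a) − φ(a')‖ ≤ δ}. Then the covering number of the image satisfies N(φ(A), δ) ≥ N(A,δ)² / E_δ(φ, A) (up to a constant depending only on dimensions). In particular, for A = A_1 × A_1 and φ(x,y) = x + f y with f linear, N(A_1 + f A_1, δ) ≥ c·N(A_1, δ)⁴ / E_δ(φ, A_1 × A_1). -/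
/-- Covering number of `A` at scale `δ`: minimal number of closed `δ`-balls covering `A`. -/
noncomputable def covN {X : Type*} [PseudoMetricSpace X] (A : Set X) (δ : ℝ) : ℕ :=
  sInf {n : ℕ | ∃ F : Finset X, F.card = n ∧ A ⊆ ⋃ x ∈ F, Metric.closedBall x δ}

/-!
Let `P` be a maximal `2δ`-separated subset of `A`. Volume doubling in dimension `d` gives
`N(A, δ) ≤ 5 ^ d · |P|`. Cover `φ(A)` by a family `G` of `δ/2`-balls with
`|G| ≤ 5 ^ d' · N(φ(A), δ)` and sort the points of `P` by a ball containing their image.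
Pairs of points of `P` sorted into the same ball form a `2δ`-separated subset of the energy set,
so there are at most `E_δ(φ, A)` of them, and Cauchy–Schwarz over the balls gives
`|P|² ≤ |G| · E_δ(φ, A)`. For the sumset bound, `P × P` is `2δ`-separated in `A₁ × A₁`, so
`N(A₁, δ)² ≤ 5 ^ (2d) · N(A₁ × A₁, δ)`.
-/

open Metric Set Bornology Module
open scoped NNReal ENNReal Finset

section CoveringNumber

variable {X : Type*} [PseudoMetricSpace X] {A : Set X} {ε : ℝ≥0}

lemma exists_set_encard_eq_externalCoveringNumber (h : externalCoveringNumber ε A ≠ ⊤) :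
    ∃ C : Set X, C.Finite ∧ IsCover ε A C ∧ C.encard = externalCoveringNumber ε A := by
  have : Nonempty {C : Set X // IsCover ε A C} := ⟨⟨univ, (IsCover.refl ε A).mono (subset_univ A)⟩⟩
  obtain ⟨C, hC⟩ := ENat.exists_eq_iInf fun C : {C : Set X // IsCover ε A C} ↦ (C : Set X).encard
  have hCe : (C : Set X).encard = externalCoveringNumber ε A := by
    rw [hC, externalCoveringNumber, iInf_subtype]
  exact ⟨C, encard_ne_top_iff.mp (hCe ▸ h), C.2, hCe⟩

lemma externalCoveringNumber_ne_top_of_totallyBounded (hε : ε ≠ 0) (hA : TotallyBounded A) :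
    externalCoveringNumber ε A ≠ ⊤ := by
  obtain ⟨C, -, hCfin, hC⟩ := exists_finite_isCover_of_totallyBounded hε hA
  exact ne_top_of_le_ne_top hCfin.encard_lt_top.ne hC.externalCoveringNumber_le_encard

lemma Bornology.IsBounded.totallyBounded [ProperSpace X] (hA : IsBounded A) : TotallyBounded A :=
  hA.isCompact_closure.totallyBounded.subset subset_closure

lemma coe_covN_eq_externalCoveringNumber (h : externalCoveringNumber ε A ≠ ⊤) :
    (covN A ε : ℕ∞) = externalCoveringNumber ε A := by
  have hcover (F : Finset X) : A ⊆ ⋃ x ∈ F, closedBall x ε ↔ IsCover ε A F := by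
    simp [isCover_iff_subset_iUnion_closedBall]
  obtain ⟨C, hCfin, hC, hCe⟩ := exists_set_encard_eq_externalCoveringNumber h
  have hC' : A ⊆ ⋃ x ∈ hCfin.toFinset, closedBall x ε := (hcover _).2 (by simpa using hC)
  refine le_antisymm ?_ ?_
  · rw [← hCe, ← hCfin.coe_toFinset, encard_coe_eq_coe_finsetCard]
    exact_mod_cast (Nat.sInf_le ⟨_, rfl, hC'⟩ : covN A ε ≤ _)
  · obtain ⟨F, hF, hFA⟩ : covN A ε ∈ _ := Nat.sInf_mem ⟨_, _, rfl, hC'⟩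
    rw [← hF, ← encard_coe_eq_coe_finsetCard]
    exact ((hcover F).1 hFA).externalCoveringNumber_le_encard

lemma Bornology.IsBounded.coe_covN_eq_externalCoveringNumber [ProperSpace X] (hA : IsBounded A)
    (hε : 0 < ε) : (covN A ε : ℕ∞) = externalCoveringNumber ε A :=
  _root_.coe_covN_eq_externalCoveringNumber <|
    externalCoveringNumber_ne_top_of_totallyBounded hε.ne' hA.totallyBounded

end CoveringNumber

lemma Metric.IsSeparated.prod {X Y : Type*} [PseudoEMetricSpace X] [PseudoEMetricSpace Y]
    {ε : ℝ≥0∞} {s : Set X} {t : Set Y} (hs : IsSeparated ε s) (ht : IsSeparated ε t) :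
    IsSeparated ε (s ×ˢ t) := by
  rintro ⟨a, b⟩ ⟨ha, hb⟩ ⟨a', b'⟩ ⟨ha', hb'⟩ hne
  rw [Prod.edist_eq, lt_max_iff]
  by_cases h : a = a'
  · subst h
    exact .inr (ht hb hb' fun h ↦ hne (Prod.ext rfl h))
  · exact .inl (hs ha ha' h)


lemma Finset.card_sq_le_card_mul_card_filter_eq {α β : Type*} [DecidableEq β] {s : Finset α}
    {t : Finset β} {f : α → β} (hf : ∀ a ∈ s, f a ∈ t) :
    #s ^ 2 ≤ #t * #{x ∈ s ×ˢ s | f x.1 = f x.2} := by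
  have hfib : #{x ∈ s ×ˢ s | f x.1 = f x.2} = ∑ c ∈ t, #{a ∈ s | f a = c} ^ 2 := by
    rw [card_eq_sum_card_fiberwise (f := fun x ↦ f x.1) fun x hx ↦ hf _ (by grind)]
    refine sum_congr rfl fun c _ ↦ ?_
    rw [sq, ← card_product]
    congr 1
    ext
    simp only [mem_filter, mem_product]
    grind
  calc #s ^ 2 = (∑ c ∈ t, #{a ∈ s | f a = c}) ^ 2 := by rw [← card_eq_sum_card_fiberwise hf]
    _ ≤ #t * ∑ c ∈ t, #{a ∈ s | f a = c} ^ 2 := sq_sum_le_card_mul_sum_sq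
    _ = #t * #{x ∈ s ×ˢ s | f x.1 = f x.2} := by rw [hfib]

def energySet {X Y : Type*} [PseudoMetricSpace Y] (φ : X → Y) (A : Set X) (δ : ℝ) :
    Set (X × X) :=
  {p | p.1 ∈ A ∧ p.2 ∈ A ∧ dist (φ p.1) (φ p.2) ≤ δ}

lemma energySet_subset_prod {X Y : Type*} [PseudoMetricSpace Y] (φ : X → Y) (A : Set X)
    (δ : ℝ) : energySet φ A δ ⊆ A ×ˢ A :=
  fun _ hp ↦ ⟨hp.1, hp.2.1⟩

lemma card_sq_le_card_mul_packingNumber_energySet {X Y : Type*} [PseudoMetricSpace X]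
    [PseudoMetricSpace Y] (φ : X → Y) {A : Set X} {δ : ℝ≥0} {P : Finset X} (hPA : ↑P ⊆ A)
    (hP : IsSeparated (2 * δ : ℝ≥0) (P : Set X)) {G : Finset Y}
    (hG : IsCover (δ / 2) (φ '' A) G) :
    (#P : ℕ∞) ^ 2 ≤ #G * packingNumber (2 * δ) (energySet φ A δ) := by
  classical
  obtain rfl | ⟨p₀, -⟩ := P.eq_empty_or_nonempty
  · simp
  have : Nonempty Y := ⟨φ p₀⟩
  have hnear : ∀ p ∈ P, ∃ c ∈ G, dist (φ p) c ≤ δ / 2 := fun p hp ↦ by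
    simpa using isCover_iff_subset_iUnion_closedBall.mp hG (mem_image_of_mem φ (hPA hp))
  choose! g hgG hg using hnear
  set Q : Finset (X × X) := {x ∈ P ×ˢ P | g x.1 = g x.2}
  have hQP : (Q : Set (X × X)) ⊆ P ×ˢ P := by
    rw [← Finset.coe_product]
    exact Finset.coe_subset.mpr (Finset.filter_subset _ _)
  have hQ : (Q : Set (X × X)) ⊆ energySet φ A δ := by
    rintro ⟨p, q⟩ hpq
    obtain ⟨⟨hp, hq⟩, hgpq⟩ : (p ∈ P ∧ q ∈ P) ∧ g p = g q := by simpa [Q] using hpq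
    refine ⟨hPA hp, hPA hq, ?_⟩
    calc dist (φ p) (φ q) ≤ dist (φ p) (g p) + dist (φ q) (g q) := by
          rw [hgpq]; exact dist_triangle_right _ _ _
      _ ≤ δ / 2 + δ / 2 := add_le_add (hg p hp) (hg q hq)
      _ = δ := add_halves _
  calc (#P : ℕ∞) ^ 2 ≤ ((#G * #Q : ℕ) : ℕ∞) := by
        exact_mod_cast Finset.card_sq_le_card_mul_card_filter_eq hgG
    _ = #G * (Q : Set (X × X)).encard := by rw [encard_coe_eq_coe_finsetCard, Nat.cast_mul]
    _ ≤ #G * packingNumber (2 * δ) (energySet φ A δ) := by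
        gcongr
        exact ((hP.prod hP).subset hQP).encard_le_packingNumber hQ

section FiniteDimensional

variable {E F : Type*} [NormedAddCommGroup E] [NormedSpace ℝ E] [FiniteDimensional ℝ E]
  [NormedAddCommGroup F] [NormedSpace ℝ F] [FiniteDimensional ℝ F] {ε δ : ℝ≥0}

lemma encard_le_of_isSeparated_subset_closedBall (hε : 0 < ε) {x : E} {C : Set E}
    (hCx : C ⊆ closedBall x (2 * ε)) (hC : IsSeparated ε C) :
    C.encard ≤ 5 ^ finrank ℝ E := by
  classical
  by_contra! hlt
  obtain ⟨s, hsC, hs⟩ := exists_subset_encard_eq (Order.add_one_le_of_lt hlt)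
  have hsfin : s.Finite := finite_of_encard_eq_coe hs
  set f : E → E := fun y ↦ (ε : ℝ)⁻¹ • (y - x)
  have hε' : (0 : ℝ) < ε := hε
  have hf : ∀ y ∈ s, ∀ z ∈ s, y ≠ z → 1 < ‖f y - f z‖ := by
    intro y hy z hz hyz
    have : (ε : ℝ≥0∞) < edist y z := hC (hsC hy) (hsC hz) hyz
    rw [edist_nndist, ENNReal.coe_lt_coe, ← NNReal.coe_lt_coe, coe_nndist, dist_eq_norm] at this
    rw [← smul_sub, sub_sub_sub_cancel_right, norm_smul, norm_inv, Real.norm_of_nonneg hε'.le,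
      lt_inv_mul_iff₀ hε', mul_one]
    exact this
  have hcard := Besicovitch.card_le_of_separated (hsfin.toFinset.image f) ?_ ?_
  · rw [Finset.card_image_of_injOn] at hcard
    · have := hsfin.encard_eq_coe_toFinset_card ▸ hs
      norm_cast at this
      omega
    · exact fun y hy z hz hyz ↦ by_contra fun hne ↦
        absurd (hf y (by simpa using hy) z (by simpa using hz) hne) (by simp [hyz])
  · simp only [Finset.mem_image, Finite.mem_toFinset, forall_exists_index, and_imp]
    rintro _ y hy rfl
    have := hCx (hsC hy)
    rw [mem_closedBall, dist_eq_norm] at this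
    rw [norm_smul, norm_inv, Real.norm_of_nonneg hε'.le, inv_mul_le_iff₀ hε']
    linarith
  · simp only [Finset.mem_image, Finite.mem_toFinset]
    rintro _ ⟨y, hy, rfl⟩ _ ⟨z, hz, rfl⟩ hne
    exact (hf y hy z hz fun h ↦ hne (h ▸ rfl)).le

lemma packingNumber_closedBall_two_mul_le (hε : 0 < ε) (x : E) :
    packingNumber ε (closedBall x (2 * ε)) ≤ 5 ^ finrank ℝ E :=
  iSup₂_le fun _C hCx ↦ iSup_le fun hC ↦
    encard_le_of_isSeparated_subset_closedBall hε hCx hC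

lemma externalCoveringNumber_le_pow_finrank_mul (hε : 0 < ε) (A : Set E) :
    externalCoveringNumber ε A ≤ 5 ^ finrank ℝ E * externalCoveringNumber (2 * ε) A := by
  by_cases htop : externalCoveringNumber (2 * ε) A = ⊤
  · simp [htop]
  obtain ⟨C, hCfin, hC, hCe⟩ := exists_set_encard_eq_externalCoveringNumber htop
  set D : E → Set E := fun c ↦ maximalSeparatedSet ε (closedBall c (2 * ε))
  have hD (c : E) : IsCover ε (closedBall c (2 * ε)) (D c) :=
    isCover_maximalSeparatedSet
      (ne_top_of_le_ne_top (by simp) (packingNumber_closedBall_two_mul_le hε c))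
  have hDcard (c : E) : (D c).encard ≤ 5 ^ finrank ℝ E :=
    encard_le_of_isSeparated_subset_closedBall hε maximalSeparatedSet_subset
      isSeparated_maximalSeparatedSet
  have hcov : IsCover ε A (⋃ c ∈ hCfin.toFinset, D c) := by
    rw [isCover_iff_subset_iUnion_closedBall] at hC ⊢
    intro a ha
    obtain ⟨c, hc, hac⟩ := mem_iUnion₂.mp (hC ha)
    obtain ⟨y, hy, hay⟩ := mem_iUnion₂.mp ((isCover_iff_subset_iUnion_closedBall.mp (hD c)) hac)
    exact mem_iUnion₂.mpr ⟨y, mem_biUnion (by simpa using hc) hy, hay⟩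
  calc externalCoveringNumber ε A
      ≤ (⋃ c ∈ hCfin.toFinset, D c).encard := hcov.externalCoveringNumber_le_encard
    _ ≤ ∑ c ∈ hCfin.toFinset, (D c).encard := Finset.set_encard_biUnion_le _ _
    _ ≤ ∑ c ∈ hCfin.toFinset, 5 ^ finrank ℝ E := Finset.sum_le_sum fun c _ ↦ hDcard c
    _ = 5 ^ finrank ℝ E * externalCoveringNumber (2 * ε) A := by
      rw [Finset.sum_const, nsmul_eq_mul, mul_comm, ← hCe, ← hCfin.encard_eq_coe_toFinset_card]

lemma externalCoveringNumber_le_pow_finrank_mul_packingNumber (hε : 0 < ε) (A : Set E) :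
    externalCoveringNumber ε A ≤ 5 ^ finrank ℝ E * packingNumber (2 * ε) A :=
  (externalCoveringNumber_le_pow_finrank_mul hε A).trans <| mul_le_mul_right
    ((externalCoveringNumber_le_coveringNumber _ A).trans (coveringNumber_le_packingNumber _ A)) _

lemma exists_finset_isSeparated_externalCoveringNumber_le (hδ : 0 < δ) {A : Set E}
    (hA : IsBounded A) :
    ∃ P : Finset E, ↑P ⊆ A ∧ IsSeparated (2 * δ : ℝ≥0) (P : Set E) ∧
      externalCoveringNumber δ A ≤ 5 ^ finrank ℝ E * #P := by
  have hpack : packingNumber (2 * δ) A ≠ ⊤ :=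
    ne_top_of_le_ne_top (externalCoveringNumber_ne_top_of_totallyBounded hδ.ne' hA.totallyBounded)
      (packingNumber_two_mul_le_externalCoveringNumber δ A)
  have hfin : (maximalSeparatedSet (2 * δ) A).Finite := by
    rw [← encard_ne_top_iff, encard_maximalSeparatedSet hpack]; exact hpack
  refine ⟨hfin.toFinset, ?_, ?_, ?_⟩
  · rw [hfin.coe_toFinset]; exact maximalSeparatedSet_subset
  · rw [hfin.coe_toFinset]; exact isSeparated_maximalSeparatedSet
  rw [← hfin.encard_eq_coe_toFinset_card, encard_maximalSeparatedSet hpack]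
  exact externalCoveringNumber_le_pow_finrank_mul_packingNumber hδ A

theorem externalCoveringNumber_mul_le_prod (hδ : 0 < δ) {A : Set E} {B : Set F}
    (hA : IsBounded A) (hB : IsBounded B) :
    externalCoveringNumber δ A * externalCoveringNumber δ B ≤
      5 ^ (finrank ℝ E + finrank ℝ F) * externalCoveringNumber δ (A ×ˢ B) := by
  obtain ⟨P, hPA, hP, hAP⟩ := exists_finset_isSeparated_externalCoveringNumber_le hδ hA
  obtain ⟨Q, hQB, hQ, hBQ⟩ := exists_finset_isSeparated_externalCoveringNumber_le hδ hB
  have hPQ : ((#P : ℕ∞) * #Q) ≤ packingNumber (2 * δ) (A ×ˢ B) := by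
    rw [← encard_coe_eq_coe_finsetCard, ← encard_coe_eq_coe_finsetCard, ← encard_prod]
    exact (hP.prod hQ).encard_le_packingNumber (prod_mono hPA hQB)
  calc externalCoveringNumber δ A * externalCoveringNumber δ B
      ≤ 5 ^ finrank ℝ E * #P * (5 ^ finrank ℝ F * #Q) := mul_le_mul' hAP hBQ
    _ = 5 ^ (finrank ℝ E + finrank ℝ F) * (#P * #Q) := by ring
    _ ≤ 5 ^ (finrank ℝ E + finrank ℝ F) * externalCoveringNumber δ (A ×ˢ B) := by
      gcongr
      exact hPQ.trans (packingNumber_two_mul_le_externalCoveringNumber δ _)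

theorem externalCoveringNumber_sq_le_energySet_mul (hδ : 0 < δ) (φ : E → F) {A : Set E}
    (hA : IsBounded A) (hφA : IsBounded (φ '' A)) :
    externalCoveringNumber δ A ^ 2 ≤ 5 ^ (2 * finrank ℝ E + finrank ℝ F) *
      externalCoveringNumber δ (energySet φ A δ) * externalCoveringNumber δ (φ '' A) := by
  obtain ⟨P, hPA, hP, hAP⟩ := exists_finset_isSeparated_externalCoveringNumber_le hδ hA
  obtain ⟨G, hGfin, hG, hGe⟩ := exists_set_encard_eq_externalCoveringNumber
    (externalCoveringNumber_ne_top_of_totallyBounded (ε := δ / 2) (by positivity)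
      hφA.totallyBounded)
  have hGcard : (#hGfin.toFinset : ℕ∞) ≤ 5 ^ finrank ℝ F * externalCoveringNumber δ (φ '' A) := by
    rw [← hGfin.encard_eq_coe_toFinset_card, hGe]
    simpa [mul_div_cancel₀] using externalCoveringNumber_le_pow_finrank_mul (half_pos hδ) (φ '' A)
  have hPG := card_sq_le_card_mul_packingNumber_energySet φ hPA hP (G := hGfin.toFinset)
    (by simpa using hG)
  calc externalCoveringNumber δ A ^ 2
      ≤ (5 ^ finrank ℝ E * #P : ℕ∞) ^ 2 := by gcongr
    _ = 5 ^ (2 * finrank ℝ E) * (#P : ℕ∞) ^ 2 := by ring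
    _ ≤ 5 ^ (2 * finrank ℝ E) * (5 ^ finrank ℝ F * externalCoveringNumber δ (φ '' A) *
          externalCoveringNumber δ (energySet φ A δ)) := by
      gcongr
      exact hPG.trans (mul_le_mul' hGcard (packingNumber_two_mul_le_externalCoveringNumber δ _))
    _ = _ := by ring

theorem externalCoveringNumber_pow_four_le_energySet_mul (hδ : 0 < δ) (φ : E × E → F)
    {A : Set E} (hA : IsBounded A) (hφA : IsBounded (φ '' (A ×ˢ A))) :
    externalCoveringNumber δ A ^ 4 ≤ 5 ^ (8 * finrank ℝ E + finrank ℝ F) *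
      externalCoveringNumber δ (energySet φ (A ×ˢ A) δ) *
      externalCoveringNumber δ (φ '' (A ×ˢ A)) := by
  have hprod := externalCoveringNumber_mul_le_prod hδ hA hA
  have henergy := externalCoveringNumber_sq_le_energySet_mul hδ φ (hA.prod hA) hφA
  rw [finrank_prod] at henergy
  calc externalCoveringNumber δ A ^ 4
      = (externalCoveringNumber δ A * externalCoveringNumber δ A) ^ 2 := by ring
    _ ≤ (5 ^ (finrank ℝ E + finrank ℝ E) * externalCoveringNumber δ (A ×ˢ A)) ^ 2 := by gcongr
    _ = 5 ^ (4 * finrank ℝ E) * externalCoveringNumber δ (A ×ˢ A) ^ 2 := by ring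
    _ ≤ 5 ^ (4 * finrank ℝ E) * (5 ^ (2 * (finrank ℝ E + finrank ℝ E) + finrank ℝ F) *
          externalCoveringNumber δ (energySet φ (A ×ˢ A) δ) *
          externalCoveringNumber δ (φ '' (A ×ˢ A))) := by gcongr
    _ = _ := by ring

end FiniteDimensional

lemma inv_pow_mul_div_le_of_le_pow_mul {N E M k e b : ℕ} (h : (N : ℕ∞) ^ k ≤ 5 ^ e * E * M)
    (heb : e ≤ b) : ((5 : ℝ) ^ b)⁻¹ * ((N : ℝ) ^ k / E) ≤ M := by
  have hℕ : N ^ k ≤ 5 ^ b * E * M :=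
    (show N ^ k ≤ 5 ^ e * E * M by exact_mod_cast h).trans (by gcongr; norm_num)
  have hℝ : (N : ℝ) ^ k ≤ 5 ^ b * E * M := by exact_mod_cast hℕ
  rcases E.eq_zero_or_pos with rfl | hE
  · simp
  rw [inv_mul_le_iff₀ (by positivity), div_le_iff₀ (by positivity)]
  linarith

/-- energy bounds covering numbers of images. With
`E_δ(φ, A) = N({(a,a') ∈ A×A : ‖φ(a) − φ(a')‖ ≤ δ}, δ)`, one has
`N(φ(A), δ) ≥ c · N(A, δ)² / E_δ(φ, A)` with `c` depending only on the dimensions; in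
particular, for `A = A₁ × A₁` and `φ(x,y) = x + f y`,
`N(A₁ + f A₁, δ) ≥ c · N(A₁, δ)⁴ / E_δ(φ, A₁ × A₁)`. -/
theorem covN_image_ge_sq_div_energy (n₁ n₂ n₃ : ℕ) :
    ∃ c : ℝ, 0 < c ∧
      (∀ (V V' W : Type)
          [NormedAddCommGroup V] [NormedSpace ℝ V] [FiniteDimensional ℝ V]
          [NormedAddCommGroup V'] [NormedSpace ℝ V'] [FiniteDimensional ℝ V']
          [NormedAddCommGroup W] [NormedSpace ℝ W] [FiniteDimensional ℝ W],
        Module.finrank ℝ V = n₁ → Module.finrank ℝ V' = n₂ → Module.finrank ℝ W = n₃ →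
        ∀ (φ : V × V' → W) (A : Set (V × V')) (δ : ℝ), 0 < δ →
          Bornology.IsBounded A → Bornology.IsBounded (φ '' A) →
          c * ((covN A δ : ℝ) ^ 2 /
              (covN {p : (V × V') × (V × V') |
                  p.1 ∈ A ∧ p.2 ∈ A ∧ dist (φ p.1) (φ p.2) ≤ δ} δ : ℝ)) ≤
            (covN (φ '' A) δ : ℝ)) ∧
      (∀ (V : Type) [NormedAddCommGroup V] [NormedSpace ℝ V] [FiniteDimensional ℝ V],
        Module.finrank ℝ V = n₁ →
        ∀ (f : V →ₗ[ℝ] V) (A₁ : Set V) (δ : ℝ), 0 < δ → Bornology.IsBounded A₁ →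
          c * ((covN A₁ δ : ℝ) ^ 4 /
              (covN {p : (V × V) × (V × V) |
                  p.1 ∈ A₁ ×ˢ A₁ ∧ p.2 ∈ A₁ ×ˢ A₁ ∧
                  dist (p.1.1 + f p.1.2) (p.2.1 + f p.2.2) ≤ δ} δ : ℝ)) ≤
            (covN (Set.image2 (fun x y => x + f y) A₁ A₁) δ : ℝ)) := by
  refine ⟨((5 : ℝ) ^ (2 * (n₁ + n₂) + n₃ + 9 * n₁))⁻¹, by positivity, ?_, ?_⟩
  · intro V V' W _ _ _ _ _ _ _ _ _ h₁ h₂ h₃ φ A δ hδ hA hφA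
    lift δ to ℝ≥0 using hδ.le
    replace hδ : 0 < δ := NNReal.coe_pos.mp hδ
    have key := externalCoveringNumber_sq_le_energySet_mul hδ φ hA hφA
    rw [← hA.coe_covN_eq_externalCoveringNumber hδ, ← hφA.coe_covN_eq_externalCoveringNumber hδ,
      ← ((hA.prod hA).subset (energySet_subset_prod φ A δ)).coe_covN_eq_externalCoveringNumber hδ,
      finrank_prod, h₁, h₂, h₃] at key
    exact inv_pow_mul_div_le_of_le_pow_mul key (by omega)
  · intro V _ _ _ h₁ f A₁ δ hδ hA₁
    lift δ to ℝ≥0 using hδ.le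
    replace hδ : 0 < δ := NNReal.coe_pos.mp hδ
    set φ : V × V → V := fun p ↦ p.1 + f p.2
    have hA := hA₁.prod hA₁
    have hφA : IsBounded (φ '' (A₁ ×ˢ A₁)) :=
      (ContinuousLinearMap.fst ℝ V V + f.toContinuousLinearMap.comp
        (ContinuousLinearMap.snd ℝ V V)).lipschitz.isBounded_image hA
    have key := externalCoveringNumber_pow_four_le_energySet_mul hδ φ hA₁ hφA
    rw [← hA₁.coe_covN_eq_externalCoveringNumber hδ, ← hφA.coe_covN_eq_externalCoveringNumber hδ,
      ← ((hA.prod hA).subset (energySet_subset_prod φ _ δ)).coe_covN_eq_externalCoveringNumber hδ,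
      h₁] at key
    rw [← image_prod]
    exact inv_pow_mul_div_le_of_le_pow_mul key (by omega)
end
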